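/- arXiv:2404.17956 — 2 statements merged into one kernel-verified Lean document; each statement's English description precedes it below -/
import Mathlib

section
/- A unimodular Lie algebra 𝔤 of dimension n ≥ 3 cannot admit both an adapted LCP structure and a conformally flat LCP structure. -/
open Module LinearMap

section LCPkit

set_option linter.unusedSectionVars false
set_option maxHeartbeats 1000000

variable {V : Type*} [AddCommGroup V] [Module ℝ V] [FiniteDimensional ℝ V]
variable {b : LinearMap.BilinForm ℝ V}

theorem lcp_nondeg (hp : ∀ x : V, x ≠ 0 → 0 < b x x) : b.Nondegenerate := by
  constructor <;> intro x hx <;> by_contra h <;> have h2 := hp x h <;> rw [hx x] at h2 <;>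
  exact lt_irrefl 0 h2

theorem lcp_b_nonneg (hp : ∀ x : V, x ≠ 0 → 0 < b x x) (z : V) : 0 ≤ b z z := by
  rcases eq_or_ne z 0 with rfl | hz
  · simp
  · exact le_of_lt (hp z hz)

theorem lcp_repr_mul {ι : Type*} [Fintype ι] [DecidableEq ι]
    (f : Basis ι ℝ V) (hf : b.IsOrthoᵢ f) (x : V) (i : ι) :
    b x (f i) = f.repr x i * b (f i) (f i) := by
  conv_lhs => rw [← f.sum_repr x]
  rw [map_sum, LinearMap.sum_apply]
  simp only [map_smul, LinearMap.smul_apply, smul_eq_mul]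
  exact Finset.sum_eq_single i (fun j _ hj => by rw [(hf hj : b (f j) (f i) = 0), mul_zero])
    (fun hi => absurd (Finset.mem_univ i) hi)

theorem lcp_trace_eq_sum (hp : ∀ x : V, x ≠ 0 → 0 < b x x)
    (f : Basis (Fin (finrank ℝ V)) ℝ V) (hf : b.IsOrthoᵢ f) (T : V →ₗ[ℝ] V) :
    trace ℝ V T = ∑ i, b (T (f i)) (f i) / b (f i) (f i) := by
  rw [LinearMap.trace_eq_matrix_trace ℝ f T, Matrix.trace]
  apply Finset.sum_congr rfl
  intro i _
  have hd : b (f i) (f i) ≠ 0 := ne_of_gt (hp _ (f.ne_zero i))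
  rw [Matrix.diag_apply, LinearMap.toMatrix_apply, lcp_repr_mul f hf (T (f i)) i]
  field_simp

theorem lcp_exists_onb (hs : ∀ x y : V, b x y = b y x) :
    ∃ f : Basis (Fin (finrank ℝ V)) ℝ V, b.IsOrthoᵢ f :=
  LinearMap.BilinForm.exists_orthogonal_basis (LinearMap.BilinForm.isSymm_iff.1 (LinearMap.BilinForm.isSymm_def.2 fun x y => hs x y))

theorem lcp_sym_eq_zero_of_trace_sq (hs : ∀ x y : V, b x y = b y x)
    (hp : ∀ x : V, x ≠ 0 → 0 < b x x)
    {T : V →ₗ[ℝ] V} (hsT : ∀ x y, b (T x) y = b x (T y))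
    (h : trace ℝ V (T ∘ₗ T) = 0) : T = 0 := by
  obtain ⟨f, hf⟩ := lcp_exists_onb hs
  rw [lcp_trace_eq_sum hp f hf] at h
  have hterm : ∀ i, b ((T ∘ₗ T) (f i)) (f i) / b (f i) (f i)
      = b (T (f i)) (T (f i)) / b (f i) (f i) := by
    intro i
    rw [LinearMap.comp_apply, hsT (T (f i)) (f i)]
  rw [Finset.sum_congr rfl (fun i _ => hterm i)] at h
  have hz : ∀ i ∈ Finset.univ, b (T (f i)) (T (f i)) / b (f i) (f i) = 0 := by
    rw [← Finset.sum_eq_zero_iff_of_nonneg]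
    · exact h
    · intro i _
      exact div_nonneg (lcp_b_nonneg hp _) (lcp_b_nonneg hp _)
  apply f.ext
  intro i
  have hz' := hz i (Finset.mem_univ i)
  have hd : (0:ℝ) < b (f i) (f i) := hp _ (f.ne_zero i)
  have hTf : b (T (f i)) (T (f i)) = 0 := by
    rcases div_eq_zero_iff.mp hz' with h' | h'
    · exact h'
    · exact absurd h' (ne_of_gt hd)
  by_contra hne
  rw [LinearMap.zero_apply] at hne
  exact absurd hTf (ne_of_gt (hp _ hne))

theorem lcp_skew_eq_zero_of_trace_sq (hs : ∀ x y : V, b x y = b y x)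
    (hp : ∀ x : V, x ≠ 0 → 0 < b x x)
    {T : V →ₗ[ℝ] V} (hsT : ∀ x y, b (T x) y = - b x (T y))
    (h : trace ℝ V (T ∘ₗ T) = 0) : T = 0 := by
  obtain ⟨f, hf⟩ := lcp_exists_onb hs
  rw [lcp_trace_eq_sum hp f hf] at h
  have hterm : ∀ i, b ((T ∘ₗ T) (f i)) (f i) / b (f i) (f i)
      = - (b (T (f i)) (T (f i)) / b (f i) (f i)) := by
    intro i
    rw [LinearMap.comp_apply, hsT (T (f i)) (f i), neg_div]
  rw [Finset.sum_congr rfl (fun i _ => hterm i), Finset.sum_neg_distrib, neg_eq_zero] at h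
  have hz : ∀ i ∈ Finset.univ, b (T (f i)) (T (f i)) / b (f i) (f i) = 0 := by
    rw [← Finset.sum_eq_zero_iff_of_nonneg]
    · exact h
    · intro i _
      exact div_nonneg (lcp_b_nonneg hp _) (lcp_b_nonneg hp _)
  apply f.ext
  intro i
  have hz' := hz i (Finset.mem_univ i)
  have hd : (0:ℝ) < b (f i) (f i) := hp _ (f.ne_zero i)
  have hTf : b (T (f i)) (T (f i)) = 0 := by
    rcases div_eq_zero_iff.mp hz' with h' | h'
    · exact h'
    · exact absurd h' (ne_of_gt hd)
  by_contra hne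
  rw [LinearMap.zero_apply] at hne
  exact absurd hTf (ne_of_gt (hp _ hne))

theorem lcp_skew_trace_sq_nonpos (hs : ∀ x y : V, b x y = b y x)
    (hp : ∀ x : V, x ≠ 0 → 0 < b x x)
    {T : V →ₗ[ℝ] V} (hsT : ∀ x y, b (T x) y = - b x (T y)) :
    trace ℝ V (T ∘ₗ T) ≤ 0 := by
  obtain ⟨f, hf⟩ := lcp_exists_onb hs
  rw [lcp_trace_eq_sum hp f hf]
  apply Finset.sum_nonpos
  intro i _
  rw [LinearMap.comp_apply, hsT (T (f i)) (f i), neg_div]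
  have := div_nonneg (lcp_b_nonneg hp (T (f i))) (lcp_b_nonneg hp (f i))
  linarith

theorem lcp_skew_trace_zero (hs : ∀ x y : V, b x y = b y x)
    (hp : ∀ x : V, x ≠ 0 → 0 < b x x)
    {T : V →ₗ[ℝ] V} (hsT : ∀ x y, b (T x) y = - b x (T y)) :
    trace ℝ V T = 0 := by
  obtain ⟨f, hf⟩ := lcp_exists_onb hs
  rw [lcp_trace_eq_sum hp f hf]
  apply Finset.sum_eq_zero
  intro i _
  have hz : b (T (f i)) (f i) = 0 := by
    have h1 := hsT (f i) (f i)
    have h2 := hs (T (f i)) (f i)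
    have h3 := hs (f i) (T (f i))
    linarith
  rw [hz, zero_div]

theorem lcp_double_cancel {ι : Type*} [Fintype ι] (M S : ι → ι → ℝ)
    (hM : ∀ i j, M i j = - M j i) (hS : ∀ i j, S i j = S j i) :
    ∑ i, ∑ j, M i j * S i j = 0 := by
  have h : (∑ i, ∑ j, M i j * S i j) = - ∑ i, ∑ j, M i j * S i j := by
    conv_lhs => rw [Finset.sum_comm]
    rw [← Finset.sum_neg_distrib]
    apply Finset.sum_congr rfl
    intro i _
    rw [← Finset.sum_neg_distrib]
    apply Finset.sum_congr rfl
    intro j _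
    rw [hM j i, hS j i]
    ring
  linarith

end LCPkit

section Part1

set_option maxHeartbeats 1000000

theorem lcp_part1
    {G : Type*} [LieRing G] [LieAlgebra ℝ G] [FiniteDimensional ℝ G]
    (g : LinearMap.BilinForm ℝ G)
    (hsymm : ∀ x y : G, g x y = g y x)
    (hpos : ∀ x : G, x ≠ 0 → 0 < g x x)
    (θ : G →ₗ[ℝ] ℝ) (hθ : θ ≠ 0) (hclosed : ∀ x y : G, θ ⁅x, y⁆ = 0)
    (U : Submodule ℝ G)
    (N : G →ₗ[ℝ] Module.End ℝ G)
    (hN : ∀ x y z : G, g (N x y) z =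
      (g ⁅x, y⁆ z - g ⁅x, z⁆ y - g ⁅y, z⁆ x) / 2
        + θ x * g y z + θ y * g x z - θ z * g x y)
    (hPsub : ∀ x ∈ LinearMap.BilinForm.orthogonal g U,
             ∀ y ∈ LinearMap.BilinForm.orthogonal g U,
             ⁅x, y⁆ ∈ LinearMap.BilinForm.orthogonal g U)
    (hpar : ∀ x : G, ∀ u ∈ U, N x u ∈ U)
    (hrep : ∀ x y : G, ∀ u ∈ U, N ⁅x, y⁆ u = N x (N y u) - N y (N x u))
    (hadapt : ∀ u ∈ U, θ u = 0) :
    ∃ x₀ ∈ LinearMap.BilinForm.orthogonal g U, θ x₀ = 1 ∧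
      (∀ u ∈ U, ∀ w ∈ U, ⁅u, w⁆ = (0:G)) ∧ (∀ z : G, ∀ u ∈ U, ⁅z, u⁆ ∈ U) := by
  classical
  set P := LinearMap.BilinForm.orthogonal g U with hPdef
  have hnd : g.Nondegenerate := lcp_nondeg hpos
  -- pairing lemmas
  have geq : ∀ a c : G, (∀ z, g a z = g c z) → a = c := by
    intro a c h
    have h0 : ∀ z, g (a - c) z = 0 := by
      intro z
      rw [map_sub, LinearMap.sub_apply, h z, sub_self]
    exact sub_eq_zero.mp (hnd.1 _ h0)
  have gUP : ∀ u ∈ U, ∀ p ∈ P, g u p = 0 := by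
    intro u hu p hp
    exact hp u hu
  have gPU : ∀ p ∈ P, ∀ u ∈ U, g p u = 0 := by
    intro p hp u hu
    rw [hsymm]; exact hp u hu
  have memP : ∀ {p : G}, (∀ u ∈ U, g u p = 0) → p ∈ P := by
    intro p h
    intro u hu
    exact h u hu
  -- torsion and Weyl identities
  have hskewbr : ∀ x y z : G, g ⁅y, x⁆ z = - g ⁅x, y⁆ z := by
    intro x y z
    have h1v : (⁅y, x⁆ : G) = -⁅x, y⁆ := by rw [← lie_skew y x]
    rw [h1v, map_neg, LinearMap.neg_apply]
  have tor : ∀ x y : G, ⁅x, y⁆ = N x y - N y x := by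
    intro x y
    refine (geq _ _ ?_).symm
    intro z
    rw [map_sub, LinearMap.sub_apply, hN x y z, hN y x z]
    have h1 := hskewbr x y z
    have h2 := hsymm x y
    have h6 : θ z * g x y = θ z * g y x := by rw [h2]
    linarith
  have weyl : ∀ z x y : G, g (N z x) y + g x (N z y) = 2 * θ z * g x y := by
    intro z x y
    rw [hN z x y]
    have h0 : g x (N z y) = g (N z y) x := hsymm _ _
    rw [h0, hN z y x]
    have h1 := hskewbr x y z
    have h3 := hsymm x y
    have h6 : θ z * g x y = θ z * g y x := by rw [h3]
    linarith
  -- restriction of g to U is positive definite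
  have hpU : ∀ x : ↥U, x ≠ 0 → 0 < (g.restrict U) x x := by
    intro x hx
    have : (x : G) ≠ 0 := fun h => hx (Subtype.ext h)
    simpa using hpos _ this
  have hsU : ∀ x y : ↥U, (g.restrict U) x y = (g.restrict U) y x := by
    intro x y
    simpa using hsymm x y
  have hcompl : IsCompl U P :=
    LinearMap.BilinForm.isCompl_orthogonal_of_restrict_nondegenerate
      (fun x y h => by rw [hsymm]; exact h) (lcp_nondeg hpU)
  -- projections
  set πU : G →ₗ[ℝ] G := U.subtype ∘ₗ U.linearProjOfIsCompl P hcompl with hπU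
  set πP : G →ₗ[ℝ] G := P.subtype ∘ₗ P.linearProjOfIsCompl U hcompl.symm with hπP
  have hπUmem : ∀ z, πU z ∈ U := fun z => (U.linearProjOfIsCompl P hcompl z).2
  have hπPmem : ∀ z, πP z ∈ P := fun z => (P.linearProjOfIsCompl U hcompl.symm z).2
  have hsum : ∀ z, πU z + πP z = z := by
    intro z
    exact Submodule.projection_add_projection_eq_self hcompl z
  have hπUU : ∀ u ∈ U, πU u = u := by
    intro u hu
    show (U.subtype) (U.projectionOnto P hcompl u) = u
    rw [show u = ((⟨u, hu⟩ : U) : G) from rfl, Submodule.projectionOnto_apply_left hcompl]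
    rfl
  have hπPP : ∀ p ∈ P, πP p = p := by
    intro p hp
    show (P.subtype) (P.projectionOnto U hcompl.symm p) = p
    rw [show p = ((⟨p, hp⟩ : P) : G) from rfl,
      Submodule.projectionOnto_apply_left hcompl.symm]
    rfl
  have hπPU : ∀ u ∈ U, πP u = 0 := by
    intro u hu
    show (P.subtype) (P.projectionOnto U hcompl.symm u) = 0
    rw [Submodule.projectionOnto_apply_of_mem_right hcompl.symm hu]
    rfl
  have hπUP : ∀ p ∈ P, πU p = 0 := by
    intro p hp
    show (U.subtype) (U.projectionOnto P hcompl p) = 0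
    rw [Submodule.projectionOnto_apply_of_mem_right hcompl hp]
    rfl
  -- N u maps P to P for u ∈ U
  have memNuP : ∀ u ∈ U, ∀ p ∈ P, N u p ∈ P := by
    intro u hu p hp
    apply memP
    intro w hw
    have h1 := weyl u p w
    have h2 : θ u = 0 := hadapt u hu
    have h3 : g p (N u w) = 0 := by
      rw [hsymm]; exact gUP _ (hpar u w hw) _ hp
    have h4 : g w (N u p) = g (N u p) w := hsymm _ _
    -- from weyl: g (N u p) w + g p (N u w) = 0
    rw [h2] at h1
    rw [h4]
    linarith
  have θbr : ∀ x y : G, θ ⁅x, y⁆ = 0 := hclosed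
  have θNP : ∀ u ∈ U, ∀ p ∈ P, θ (N u p) = 0 := by
    intro u hu p hp
    have h1 : N u p = ⁅u, p⁆ + N p u := by rw [tor u p]; abel
    rw [h1, map_add, θbr, hadapt _ (hpar p u hu), add_zero]
  -- construction of x₀
  set ξθ : G := (g.toDual hnd).symm θ with hξθ
  have hgξθ : ∀ z, g ξθ z = θ z := by
    intro z
    exact LinearMap.BilinForm.apply_toDual_symm_apply θ z
  set ζ : G := πP ξθ with hζ
  have hζP : ζ ∈ P := hπPmem ξθ
  have hgζ : ∀ p ∈ P, g ζ p = θ p := by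
    intro p hp
    have h1 : g ξθ p = θ p := hgξθ p
    have h2 : ξθ = πU ξθ + πP ξθ := (hsum ξθ).symm
    rw [h2, map_add, LinearMap.add_apply] at h1
    have h3 : g (πU ξθ) p = 0 := gUP _ (hπUmem ξθ) _ hp
    rw [h3, zero_add] at h1
    exact h1
  have hζne : ζ ≠ 0 := by
    intro h0
    apply hθ
    apply LinearMap.ext
    intro z
    have h1 : θ (πU z) = 0 := hadapt _ (hπUmem z)
    have h2 : θ (πP z) = 0 := by
      rw [← hgζ _ (hπPmem z), h0, map_zero, LinearMap.zero_apply]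
    have h3 : z = πU z + πP z := (hsum z).symm
    rw [h3, map_add, h1, h2]
    simp
  set c₀ : ℝ := θ ζ with hc₀def
  have hc₀ : c₀ = g ζ ζ := (hgζ ζ hζP).symm
  have hc₀pos : 0 < c₀ := by rw [hc₀]; exact hpos ζ hζne
  set x₀ : G := c₀⁻¹ • ζ with hx₀def
  have hx₀P : x₀ ∈ P := Submodule.smul_mem P _ hζP
  have hθx₀ : θ x₀ = 1 := by
    rw [hx₀def, map_smul, smul_eq_mul, ← hc₀def, inv_mul_cancel₀ (ne_of_gt hc₀pos)]
  have hgx₀ : ∀ p ∈ P, g x₀ p = c₀⁻¹ * θ p := by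
    intro p hp
    rw [hx₀def, map_smul, LinearMap.smul_apply, smul_eq_mul, hgζ p hp]
  -- N u x₀ = 0
  have hNux₀ : ∀ u ∈ U, N u x₀ = 0 := by
    intro u hu
    apply geq
    intro z
    rw [map_zero, LinearMap.zero_apply]
    have hz : z = πU z + πP z := (hsum z).symm
    rw [hz, map_add]
    have h1 : g (N u x₀) (πU z) = 0 := gPU _ (memNuP u hu x₀ hx₀P) _ (hπUmem z)
    have h2 : g (N u x₀) (πP z) = 0 := by
      have hw := weyl u x₀ (πP z)
      rw [hadapt u hu] at hw
      norm_num at hw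
      have h3 : g x₀ (N u (πP z)) = c₀⁻¹ * θ (N u (πP z)) :=
        hgx₀ _ (memNuP u hu _ (hπPmem z))
      rw [θNP u hu _ (hπPmem z), mul_zero] at h3
      linarith
    rw [h1, h2, add_zero]
  -- the key Jacobi identity
  have key : ∀ u ∈ U, ∀ x ∈ P, N (N x₀ u) x = N u ⁅x, x₀⁆ - ⁅N u x, x₀⁆ := by
    intro u hu x hx
    have hv' : N x₀ u ∈ U := hpar x₀ u hu
    have hy : (⁅x, x₀⁆ : G) ∈ P := hPsub x hx x₀ hx₀P
    have hNxu : N x u ∈ U := hpar x u hu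
    have hJ : ⁅⁅u, x⁆, x₀⁆ = ⁅u, ⁅x, x₀⁆⁆ - ⁅x, ⁅u, x₀⁆⁆ := lie_lie u x x₀
    have e1 : (⁅u, x₀⁆ : G) = - N x₀ u := by rw [tor u x₀, hNux₀ u hu, zero_sub]
    have e2 : (⁅u, x⁆ : G) = N u x - N x u := tor u x
    have e3 : (⁅N x u, x₀⁆ : G) = - N x₀ (N x u) := by
      rw [tor (N x u) x₀, hNux₀ _ hNxu, zero_sub]
    have e4 : (⁅u, ⁅x, x₀⁆⁆ : G) = N u ⁅x, x₀⁆ - N ⁅x, x₀⁆ u := tor u ⁅x, x₀⁆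
    have e5 : (⁅x, ⁅u, x₀⁆⁆ : G) = - (N x (N x₀ u) - N (N x₀ u) x) := by
      rw [e1, lie_neg, tor x (N x₀ u)]
    rw [e2, sub_lie, e3, e4, e5] at hJ
    set L : G := N (N x₀ u) x - (N u ⁅x, x₀⁆ - ⁅N u x, x₀⁆) with hL
    have hLP : L ∈ P := by
      apply Submodule.sub_mem
      · exact memNuP _ hv' _ hx
      · exact Submodule.sub_mem _ (memNuP _ hu _ hy) (hPsub _ (memNuP u hu x hx) _ hx₀P)
    have hLU : L ∈ U := by
      have hL2 : L = N x (N x₀ u) - N x₀ (N x u) - N ⁅x, x₀⁆ u := by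
        rw [hL]
        linear_combination (norm := module) hJ
      rw [hL2]
      exact Submodule.sub_mem _ (Submodule.sub_mem _ (hpar _ _ hv') (hpar _ _ hNxu))
        (hpar _ _ hu)
    have hL0 : L = 0 := (Submodule.disjoint_def.mp hcompl.disjoint) L hLU hLP
    exact sub_eq_zero.mp hL0
  -- operators
  set 𝒟 : G →ₗ[ℝ] Module.End ℝ G := (LinearMap.lcomp ℝ G πP).comp N with h𝒟
  set ℬ : G →ₗ[ℝ] Module.End ℝ G := (LinearMap.lcomp ℝ G πU).comp N with hℬ
  have 𝒟app : ∀ u z : G, 𝒟 u z = N u (πP z) := fun u z => rfl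
  have ℬapp : ∀ u z : G, ℬ u z = N u (πU z) := fun u z => rfl
  set EE : Module.End ℝ G := (LieAlgebra.ad ℝ G x₀) ∘ₗ πP with hEE
  have hEop : ∀ u ∈ U, 𝒟 (N x₀ u) = EE * 𝒟 u - 𝒟 u * EE := by
    intro u hu
    apply LinearMap.ext
    intro z
    have hz : πP z ∈ P := hπPmem z
    rw [LinearMap.sub_apply, Module.End.mul_apply, Module.End.mul_apply]
    rw [𝒟app, key u hu (πP z) hz]
    have h2 : EE (𝒟 u z) = ⁅x₀, πP (N u (πP z))⁆ := rfl
    have h3 : 𝒟 u (EE z) = N u (πP ⁅x₀, πP z⁆) := rfl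
    rw [h2, h3, hπPP _ (memNuP u hu _ hz), hπPP _ (hPsub _ hx₀P _ hz)]
    have h4 : (⁅πP z, x₀⁆ : G) = -⁅x₀, πP z⁆ := by rw [← lie_skew (πP z) x₀]
    have h5 : (⁅N u (πP z), x₀⁆ : G) = -⁅x₀, N u (πP z)⁆ := by
      rw [← lie_skew (N u (πP z)) x₀]
    rw [h4, h5, map_neg]
    abel
  have hEopB : ∀ u ∈ U, ℬ (N x₀ u) = ℬ x₀ * ℬ u - ℬ u * ℬ x₀ := by
    intro u hu
    apply LinearMap.ext
    intro z
    have hz : πU z ∈ U := hπUmem z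
    have hbr : (⁅x₀, u⁆ : G) = N x₀ u := by rw [tor x₀ u, hNux₀ u hu, sub_zero]
    rw [LinearMap.sub_apply, Module.End.mul_apply, Module.End.mul_apply]
    rw [ℬapp, ← hbr, hrep x₀ u (πU z) hz]
    have h2 : ℬ x₀ (ℬ u z) = N x₀ (πU (N u (πU z))) := rfl
    have h3 : ℬ u (ℬ x₀ z) = N u (πU (N x₀ (πU z))) := rfl
    rw [h2, h3, hπUU _ (hpar u _ hz), hπUU _ (hpar x₀ _ hz)]
  -- skew symmetry of the operators
  have gsplit : ∀ a c : G, g a c = g (πU a) c + g (πP a) c := by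
    intro a c
    conv_lhs => rw [← hsum a]
    rw [map_add, LinearMap.add_apply]
  have gsplitr : ∀ a c : G, g a c = g a (πU c) + g a (πP c) := by
    intro a c
    conv_lhs => rw [← hsum c]
    rw [map_add]
  have skew𝒟 : ∀ u ∈ U, ∀ a c : G, g (𝒟 u a) c = - g a (𝒟 u c) := by
    intro u hu a c
    have hm : N u (πP a) ∈ P := memNuP u hu _ (hπPmem a)
    have hmc : N u (πP c) ∈ P := memNuP u hu _ (hπPmem c)
    have h1 : g (𝒟 u a) c = g (N u (πP a)) (πP c) := by
      rw [𝒟app, gsplitr (N u (πP a)) c, gPU _ hm _ (hπUmem c), zero_add]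
    have h2 : g a (𝒟 u c) = g (πP a) (N u (πP c)) := by
      rw [𝒟app, gsplit a (N u (πP c)), gUP _ (hπUmem a) _ hmc, zero_add]
    have hw := weyl u (πP a) (πP c)
    rw [hadapt u hu] at hw
    norm_num at hw
    rw [h1, h2]
    linarith
  have skewℬ : ∀ u ∈ U, ∀ a c : G, g (ℬ u a) c = - g a (ℬ u c) := by
    intro u hu a c
    have hm : N u (πU a) ∈ U := hpar u _ (hπUmem a)
    have hmc : N u (πU c) ∈ U := hpar u _ (hπUmem c)
    have h1 : g (ℬ u a) c = g (N u (πU a)) (πU c) := by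
      rw [ℬapp, gsplitr (N u (πU a)) c, gUP _ hm _ (hπPmem c), add_zero]
    have h2 : g a (ℬ u c) = g (πU a) (N u (πU c)) := by
      rw [ℬapp, gsplit a (N u (πU c)), gPU _ (hπPmem a) _ hmc, add_zero]
    have hw := weyl u (πU a) (πU c)
    rw [hadapt u hu] at hw
    norm_num at hw
    rw [h1, h2]
    linarith
  -- the generic trace argument
  have G1 : ∀ 𝒪 : G →ₗ[ℝ] Module.End ℝ G,
      (∀ u ∈ U, LinearMap.trace ℝ G (𝒪 (N x₀ u) * 𝒪 u) = 0) →
      (∀ u ∈ U, ∀ a c : G, g (𝒪 u a) c = - g a (𝒪 u c)) →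
      ∀ u ∈ U, 𝒪 u = 0 := by
    intro 𝒪 h₀ hsk
    obtain ⟨f, hf⟩ := lcp_exists_onb (b := g.restrict U) hsU
    set d : Fin (finrank ℝ ↥U) → ℝ := fun i => g (f i : G) (f i : G) with hd
    have hdpos : ∀ i, 0 < d i := by
      intro i
      apply hpos
      exact fun h => (f.ne_zero i) (Subtype.ext h)
    have hexp : ∀ w ∈ U, w = ∑ i, (g w (f i : G) / d i) • ((f i : G)) := by
      intro w hw
      have hrepr : ∀ i, (f.repr ⟨w, hw⟩) i = g w (f i : G) / d i := by
        intro i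
        have hh := lcp_repr_mul (b := g.restrict U) f hf ⟨w, hw⟩ i
        have hne : d i ≠ 0 := ne_of_gt (hdpos i)
        have hh' : g w (f i : G) = (f.repr ⟨w, hw⟩) i * d i := by
          simpa [LinearMap.BilinForm.restrict_apply, LinearMap.domRestrict_apply] using hh
        rw [eq_div_iff hne]
        exact hh'.symm
      have hsum' := f.sum_repr ⟨w, hw⟩
      have hco := congrArg (Submodule.subtype U) hsum'
      simp only [map_sum, map_smul] at hco
      calc w = (Submodule.subtype U) ⟨w, hw⟩ := rfl
        _ = ∑ i, (f.repr ⟨w, hw⟩) i • ((f i : G)) := hco.symm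
        _ = ∑ i, (g w (f i : G) / d i) • ((f i : G)) := by
            apply Finset.sum_congr rfl
            intro i _
            rw [hrepr i]
    have hB₀mem : ∀ u ∈ U, N x₀ u - u ∈ U := fun u hu =>
      Submodule.sub_mem _ (hpar x₀ u hu) hu
    have hB₀skew : ∀ u ∈ U, ∀ w ∈ U, g (N x₀ u - u) w = - g (N x₀ w - w) u := by
      intro u hu w hw
      have hwy := weyl x₀ u w
      rw [hθx₀] at hwy
      have h1 : g u (N x₀ w) = g (N x₀ w) u := hsymm _ _
      have h2 : g u w = g w u := hsymm _ _
      rw [map_sub, LinearMap.sub_apply, map_sub, LinearMap.sub_apply]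
      linarith
    have hstep : ∀ u ∈ U,
        LinearMap.trace ℝ G (𝒪 (N x₀ u - u) * 𝒪 u) + LinearMap.trace ℝ G (𝒪 u * 𝒪 u) = 0 := by
      intro u hu
      have hh := h₀ u hu
      rw [show N x₀ u = (N x₀ u - u) + u by abel] at hh
      rw [map_add, add_mul, map_add] at hh
      linarith
    have htrsym : ∀ a c : G,
        LinearMap.trace ℝ G (𝒪 a * 𝒪 c) = LinearMap.trace ℝ G (𝒪 c * 𝒪 a) :=
      fun a c => LinearMap.trace_mul_comm ℝ (𝒪 a) (𝒪 c)
    have hexp2 : ∀ i, LinearMap.trace ℝ G (𝒪 (N x₀ (f i : G) - (f i : G)) * 𝒪 (f i : G))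
        = ∑ k, (g (N x₀ (f i : G) - (f i : G)) (f k : G) / d k)
            * LinearMap.trace ℝ G (𝒪 (f k : G) * 𝒪 (f i : G)) := by
      intro i
      conv_lhs => rw [hexp _ (hB₀mem _ (f i).2), map_sum]
      rw [Finset.sum_mul, map_sum]
      apply Finset.sum_congr rfl
      intro k _
      rw [map_smul, smul_mul_assoc, map_smul, smul_eq_mul]
    have hsum0 : ∑ i, (LinearMap.trace ℝ G (𝒪 (f i : G) * 𝒪 (f i : G))) / d i = 0 := by
      have hA : ∑ i, (LinearMap.trace ℝ G (𝒪 (N x₀ (f i:G) - (f i:G)) * 𝒪 (f i:G))) / d i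
          = - ∑ i, (LinearMap.trace ℝ G (𝒪 (f i:G) * 𝒪 (f i:G))) / d i := by
        rw [← Finset.sum_neg_distrib]
        apply Finset.sum_congr rfl
        intro i _
        have hh := hstep (f i : G) (f i).2
        have heq : LinearMap.trace ℝ G (𝒪 (N x₀ (f i:G) - (f i:G)) * 𝒪 (f i:G))
            = - LinearMap.trace ℝ G (𝒪 (f i:G) * 𝒪 (f i:G)) := by linarith
        rw [heq, neg_div]
      have hB : ∑ i, (LinearMap.trace ℝ G (𝒪 (N x₀ (f i:G) - (f i:G)) * 𝒪 (f i:G))) / d i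
          = 0 := by
        have hconv : ∑ i, (LinearMap.trace ℝ G (𝒪 (N x₀ (f i:G) - (f i:G)) * 𝒪 (f i:G))) / d i
            = ∑ i, ∑ k, (g (N x₀ (f i:G) - (f i:G)) (f k : G) / (d i * d k))
                * LinearMap.trace ℝ G (𝒪 (f k : G) * 𝒪 (f i : G)) := by
          apply Finset.sum_congr rfl
          intro i _
          rw [hexp2 i, Finset.sum_div]
          apply Finset.sum_congr rfl
          intro k _
          rw [div_mul_eq_mul_div, div_div, div_mul_eq_mul_div, mul_comm (d k) (d i)]
        rw [hconv]
        apply lcp_double_cancel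
        · intro i k
          have := hB₀skew (f i : G) (f i).2 (f k : G) (f k).2
          rw [this]
          rw [show d i * d k = d k * d i from mul_comm _ _]
          ring
        · intro i k
          exact htrsym _ _
      linarith
    have hzero : ∀ i, LinearMap.trace ℝ G (𝒪 (f i:G) * 𝒪 (f i:G)) = 0 := by
      have hnonpos : ∀ i ∈ Finset.univ,
          (LinearMap.trace ℝ G (𝒪 (f i:G) * 𝒪 (f i:G))) / d i ≤ 0 := by
        intro i _
        apply div_nonpos_of_nonpos_of_nonneg
        · exact lcp_skew_trace_sq_nonpos hsymm hpos (hsk _ (f i).2)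
        · exact le_of_lt (hdpos i)
      have hall := (Finset.sum_eq_zero_iff_of_nonpos hnonpos).mp hsum0
      intro i
      have hi := hall i (Finset.mem_univ i)
      rcases div_eq_zero_iff.mp hi with h | h
      · exact h
      · exact absurd h (ne_of_gt (hdpos i))
    intro u hu
    rw [hexp u hu, map_sum]
    apply Finset.sum_eq_zero
    intro i _
    rw [map_smul]
    rw [lcp_skew_eq_zero_of_trace_sq hsymm hpos (hsk _ (f i).2) (hzero i), smul_zero]
  -- apply the trace argument
  have h₀𝒟 : ∀ u ∈ U, LinearMap.trace ℝ G (𝒟 (N x₀ u) * 𝒟 u) = 0 := by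
    intro u hu
    rw [hEop u hu, sub_mul, map_sub]
    have hc : LinearMap.trace ℝ G (𝒟 u * EE * 𝒟 u) = LinearMap.trace ℝ G (EE * 𝒟 u * 𝒟 u) := by
      rw [mul_assoc]
      rw [LinearMap.trace_mul_comm ℝ (𝒟 u) (EE * 𝒟 u)]
    rw [hc, sub_self]
  have h₀ℬ : ∀ u ∈ U, LinearMap.trace ℝ G (ℬ (N x₀ u) * ℬ u) = 0 := by
    intro u hu
    rw [hEopB u hu, sub_mul, map_sub]
    have hc : LinearMap.trace ℝ G (ℬ u * ℬ x₀ * ℬ u) = LinearMap.trace ℝ G (ℬ x₀ * ℬ u * ℬ u) := by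
      rw [mul_assoc]
      rw [LinearMap.trace_mul_comm ℝ (ℬ u) (ℬ x₀ * ℬ u)]
    rw [hc, sub_self]
  have h𝒟0 := G1 𝒟 h₀𝒟 skew𝒟
  have hℬ0 := G1 ℬ h₀ℬ skewℬ
  have hNuzero : ∀ u ∈ U, ∀ z : G, N u z = 0 := by
    intro u hu z
    have h1 : N u (πU z) = 0 := by
      have hh := congrArg (fun T : Module.End ℝ G => T z) (hℬ0 u hu)
      simpa [ℬapp] using hh
    have h2 : N u (πP z) = 0 := by
      have hh := congrArg (fun T : Module.End ℝ G => T z) (h𝒟0 u hu)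
      simpa [𝒟app] using hh
    calc N u z = N u (πU z + πP z) := by rw [hsum z]
      _ = N u (πU z) + N u (πP z) := map_add _ _ _
      _ = 0 := by rw [h1, h2, add_zero]
  have habel : ∀ u ∈ U, ∀ w ∈ U, ⁅u, w⁆ = (0:G) := by
    intro u hu w hw
    rw [tor u w, hNuzero u hu w, hNuzero w hw u, sub_zero]
  have hideal : ∀ z : G, ∀ u ∈ U, ⁅z, u⁆ ∈ U := by
    intro z u hu
    rw [tor z u, hNuzero u hu z, sub_zero]
    exact hpar z u hu
  exact ⟨x₀, hx₀P, hθx₀, habel, hideal⟩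

theorem lcp_trsr {G : Type*} [AddCommGroup G] [Module ℝ G] [FiniteDimensional ℝ G]
    (φ : G →ₗ[ℝ] ℝ) (v : G) : LinearMap.trace ℝ G (φ.smulRight v) = φ v := by
  have h1 : φ.smulRight v = (LinearMap.toSpanSingleton ℝ G v) ∘ₗ φ := by
    ext z
    simp [LinearMap.toSpanSingleton_apply]
  rw [h1, LinearMap.trace_comp_comm']
  have h2 : (φ ∘ₗ LinearMap.toSpanSingleton ℝ G v) = (φ v) • (1 : Module.End ℝ ℝ) := by
    apply LinearMap.ext
    intro r
    simp [LinearMap.toSpanSingleton_apply, mul_comm]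
  rw [h2, map_smul, LinearMap.trace_one, smul_eq_mul]
  simp



/-- A unimodular Lie algebra `𝔤` of dimension `n ≥ 3` cannot admit both an adapted
LCP structure `(g,θ,𝔲)` and a conformally flat LCP structure `(g',θ')`. -/
theorem no_adapted_and_conformallyFlat
    {G : Type*} [LieRing G] [LieAlgebra ℝ G] [FiniteDimensional ℝ G]
    (g : LinearMap.BilinForm ℝ G)
    (hsymm : ∀ x y : G, g x y = g y x)
    (hpos : ∀ x : G, x ≠ 0 → 0 < g x x)
    -- θ : non-zero closed 1-form
    (θ : G →ₗ[ℝ] ℝ) (hθ : θ ≠ 0) (hclosed : ∀ x y : G, θ ⁅x, y⁆ = 0)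
    -- 𝔲 : non-zero subspace
    (U : Submodule ℝ G) (hUne : U ≠ ⊥)
    -- the Weyl connection ∇^θ determined by g and θ
    (N : G →ₗ[ℝ] Module.End ℝ G)
    (hN : ∀ x y z : G, g (N x y) z =
      (g ⁅x, y⁆ z - g ⁅x, z⁆ y - g ⁅y, z⁆ x) / 2
        + θ x * g y z + θ y * g x z - θ z * g x y)
    -- (1) 𝔲 and 𝔲^⊥ are Lie subalgebras
    (hUsub : ∀ u ∈ U, ∀ v ∈ U, ⁅u, v⁆ ∈ U)
    (hPsub : ∀ x ∈ LinearMap.BilinForm.orthogonal g U,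
             ∀ y ∈ LinearMap.BilinForm.orthogonal g U,
             ⁅x, y⁆ ∈ LinearMap.BilinForm.orthogonal g U)
    -- (2)
    (h2 : ∀ u ∈ U, ∀ x ∈ LinearMap.BilinForm.orthogonal g U,
      g ⁅u, x⁆ x = θ u * g x x ∧ g ⁅x, u⁆ u = θ x * g u u)
    -- (3) 𝔲 is ∇^θ-parallel and x ↦ ∇^θ_x|_𝔲 is a Lie algebra representation
    (hpar : ∀ x : G, ∀ u ∈ U, N x u ∈ U)
    (hrep : ∀ x y : G, ∀ u ∈ U, N ⁅x, y⁆ u = N x (N y u) - N y (N x u))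
    -- the LCP structure (g,θ,U) is adapted (hence proper)
    (hproper : U ≠ ⊤) (hadapt : ∀ u ∈ U, θ u = 0)
    -- (g',θ') is a conformally flat LCP structure
    (g' : LinearMap.BilinForm ℝ G)
    (hsymm' : ∀ x y : G, g' x y = g' y x)
    (hpos' : ∀ x : G, x ≠ 0 → 0 < g' x x)
    (θ' : G →ₗ[ℝ] ℝ) (hθ' : θ' ≠ 0) (hclosed' : ∀ x y : G, θ' ⁅x, y⁆ = 0)
    (N' : G →ₗ[ℝ] Module.End ℝ G)
    (hN' : ∀ x y z : G, g' (N' x y) z =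
      (g' ⁅x, y⁆ z - g' ⁅x, z⁆ y - g' ⁅y, z⁆ x) / 2
        + θ' x * g' y z + θ' y * g' x z - θ' z * g' x y)
    (hrep' : ∀ x y : G, N' ⁅x, y⁆ = N' x * N' y - N' y * N' x)
    -- 𝔤 is unimodular of dimension at least 3
    (hunim : ∀ x : G, LinearMap.trace ℝ G (LieAlgebra.ad ℝ G x) = 0)
    (hdim : 3 ≤ Module.finrank ℝ G) :
    False := by
  classical
  obtain ⟨x₀, hx₀P, hθx₀, habel, hideal⟩ :=
    lcp_part1 g hsymm hpos θ hθ hclosed U N hN hPsub hpar hrep hadapt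
  obtain ⟨u₁, hu₁U, hu₁ne⟩ := (Submodule.ne_bot_iff U).mp hUne
  set k : G := ⁅x₀, u₁⁆ with hk
  have hkU : k ∈ U := hideal x₀ u₁ hu₁U
  have hkne : k ≠ 0 := by
    have h2' := (h2 u₁ hu₁U x₀ hx₀P).2
    rw [hθx₀, one_mul] at h2'
    intro h0
    rw [← hk, h0, map_zero, LinearMap.zero_apply] at h2'
    exact absurd h2'.symm (ne_of_gt (hpos u₁ hu₁ne))
  have hθ'k : θ' k = 0 := by rw [hk]; exact hclosed' x₀ u₁
  have hbr : (⁅u₁, k⁆ : G) = 0 := habel u₁ hu₁U k hkU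

  classical
  set n : ℕ := finrank ℝ G with hn
  have hnd' : g'.Nondegenerate := by
    constructor <;> intro x hx <;> by_contra h <;> have h2 := hpos' x h <;> rw [hx x] at h2 <;>
    exact lt_irrefl 0 h2
  -- the skew operator family A
  set A : G →ₗ[ℝ] Module.End ℝ G := N' - θ'.smulRight LinearMap.id with hA
  have hAapp : ∀ z x : G, A z x = N' z x - θ' z • x := fun z x => rfl
  have geq' : ∀ a c : G, (∀ z, g' a z = g' c z) → a = c := by
    intro a c h
    have h0 : ∀ z, g' (a - c) z = 0 := by
      intro z
      rw [map_sub, LinearMap.sub_apply, h z, sub_self]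
    exact sub_eq_zero.mp (hnd'.1 _ h0)
  have hskewbr : ∀ x y z : G, g' ⁅y, x⁆ z = - g' ⁅x, y⁆ z := by
    intro x y z
    have h1v : (⁅y, x⁆ : G) = -⁅x, y⁆ := by rw [← lie_skew y x]
    rw [h1v, map_neg, LinearMap.neg_apply]
  have tor' : ∀ x y : G, ⁅x, y⁆ = N' x y - N' y x := by
    intro x y
    refine (geq' _ _ ?_).symm
    intro z
    rw [map_sub, LinearMap.sub_apply, hN' x y z, hN' y x z]
    have h1 := hskewbr x y z
    have h2 := hsymm' x y
    have h6 : θ' z * g' x y = θ' z * g' y x := by rw [h2]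
    linarith
  have weyl' : ∀ z x y : G, g' (N' z x) y + g' x (N' z y) = 2 * θ' z * g' x y := by
    intro z x y
    rw [hN' z x y]
    have h0 : g' x (N' z y) = g' (N' z y) x := hsymm' _ _
    rw [h0, hN' z y x]
    have h1 := hskewbr x y z
    have h3 := hsymm' x y
    have h6 : θ' z * g' x y = θ' z * g' y x := by rw [h3]
    linarith
  have skewA : ∀ z x y : G, g' (A z x) y = - g' x (A z y) := by
    intro z x y
    rw [hAapp, hAapp, map_sub, LinearMap.sub_apply, map_sub]
    have hw := weyl' z x y
    have h1 : g' (θ' z • x) y = θ' z * g' x y := by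
      rw [map_smul, LinearMap.smul_apply, smul_eq_mul]
    have h2 : g' x (θ' z • y) = θ' z * g' x y := by
      rw [map_smul, smul_eq_mul]
    rw [h1, h2]
    linarith
  have torA : ∀ x y : G, (⁅x, y⁆ : G) = A x y - A y x + θ' x • y - θ' y • x := by
    intro x y
    rw [tor' x y, hAapp, hAapp]
    module
  have repA : ∀ x y : G, A ⁅x, y⁆ = A x * A y - A y * A x := by
    intro x y
    have h1 : A ⁅x, y⁆ = N' ⁅x, y⁆ - θ' ⁅x, y⁆ • LinearMap.id := rfl
    rw [h1, hclosed' x y, hrep' x y, zero_smul, sub_zero]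
    apply LinearMap.ext
    intro z
    have e1 : ∀ a b : G, A a b = N' a b - θ' a • b := hAapp
    simp only [LinearMap.sub_apply, Module.End.mul_apply, e1, map_sub, map_smul]
    module
  -- A k = 0
  have hAk : A k = 0 := by
    have hKK : LinearMap.trace ℝ G (A k ∘ₗ A k) = 0 := by
      have h1 : A k = A x₀ * A u₁ - A u₁ * A x₀ := by rw [hk, repA]
      have h2 : LinearMap.trace ℝ G (A k ∘ₗ A k)
          = LinearMap.trace ℝ G ((A x₀ * A u₁ - A u₁ * A x₀) * A k) := by
        rw [← Module.End.mul_eq_comp, ← h1]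
      rw [h2, sub_mul, map_sub]
      have h3 : LinearMap.trace ℝ G (A u₁ * A x₀ * A k)
          = LinearMap.trace ℝ G (A x₀ * (A k * A u₁)) := by
        rw [mul_assoc, LinearMap.trace_mul_comm ℝ (A u₁) (A x₀ * A k), mul_assoc]
      rw [h3, mul_assoc]
      rw [← map_sub, ← mul_sub]
      have h4 : A u₁ * A k - A k * A u₁ = A ⁅u₁, k⁆ := (repA u₁ k).symm
      rw [h4, hbr, map_zero, mul_zero, map_zero]
    exact lcp_skew_eq_zero_of_trace_sq hsymm' hpos' (skewA k) hKK
  -- the dual vector of θ'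
  set ξ : G := (g'.toDual hnd').symm θ' with hξ
  have hgξ : ∀ z, g' ξ z = θ' z := fun z => LinearMap.BilinForm.apply_toDual_symm_apply θ' z
  have hξne : ξ ≠ 0 := by
    intro h0
    apply hθ'
    apply LinearMap.ext
    intro z
    rw [← hgξ z, h0, map_zero, LinearMap.zero_apply]
  set c : ℝ := θ' ξ with hc
  have hcg : c = g' ξ ξ := (hgξ ξ).symm
  have hcpos : 0 < c := by rw [hcg]; exact hpos' ξ hξne
  -- trace facts
  have trA : ∀ z, LinearMap.trace ℝ G (A z) = 0 := fun z =>
    lcp_skew_trace_zero hsymm' hpos' (skewA z)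
  have hN'z : ∀ z, N' z = A z + θ' z • (1 : Module.End ℝ G) := by
    intro z
    apply LinearMap.ext
    intro w
    rw [LinearMap.add_apply, hAapp, LinearMap.smul_apply, Module.End.one_apply]
    module
  have trN' : ∀ z, LinearMap.trace ℝ G (N' z) = (n : ℝ) * θ' z := by
    intro z
    rw [hN'z z, map_add, trA, map_smul, LinearMap.trace_one, zero_add, smul_eq_mul, mul_comm]
  have had : ∀ x : G, (LieAlgebra.ad ℝ G x : G →ₗ[ℝ] G) = N' x - N'.flip x := by
    intro x
    apply LinearMap.ext
    intro z
    rw [LieAlgebra.ad_apply, LinearMap.sub_apply, LinearMap.flip_apply, ← tor' x z]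
  have trflip : ∀ x, LinearMap.trace ℝ G (N'.flip x) = (n : ℝ) * θ' x := by
    intro x
    have h0 := hunim x
    rw [had x, map_sub, trN'] at h0
    linarith
  have hAflip : ∀ v, A.flip v = N'.flip v - θ'.smulRight v := by
    intro v
    apply LinearMap.ext
    intro z
    simp only [LinearMap.flip_apply, LinearMap.sub_apply, LinearMap.smulRight_apply]
    rw [hAapp]
  have trAflip : ∀ v, LinearMap.trace ℝ G (A.flip v) = ((n : ℝ) - 1) * θ' v := by
    intro v
    rw [hAflip v, map_sub, trflip, lcp_trsr]
    ring
  -- the symmetric operator Σ and company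
  set S : G →ₗ[ℝ] G := A.flip ξ with hS
  set D : G →ₗ[ℝ] G := A ξ with hD
  set w₀ : G := A ξ ξ with hw₀
  have hSapp : ∀ x, S x = A x ξ := fun x => rfl
  have hSξ : S ξ = w₀ := rfl
  have hθw₀ : θ' w₀ = 0 := by
    have h1 : g' (A ξ ξ) ξ = - g' ξ (A ξ ξ) := skewA ξ ξ ξ
    have h2 : g' (A ξ ξ) ξ = g' ξ (A ξ ξ) := hsymm' _ _
    have h3 : θ' w₀ = g' ξ w₀ := (hgξ w₀).symm
    rw [hw₀] at *
    linarith
  have symS : ∀ x y : G, g' (S x) y = g' (S y) x := by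
    intro x y
    have h0 : θ' ⁅x, y⁆ = 0 := hclosed' x y
    rw [torA x y] at h0
    simp only [map_sub, map_add, map_smul, smul_eq_mul] at h0
    have h2 : θ' (A x y) = - g' y (S x) := by
      have ha : g' (A x y) ξ = - g' y (A x ξ) := skewA x y ξ
      rw [← hgξ (A x y), hsymm' ξ (A x y), ha, hSapp]
    have h3 : θ' (A y x) = - g' x (S y) := by
      have ha : g' (A y x) ξ = - g' x (A y ξ) := skewA y x ξ
      rw [← hgξ (A y x), hsymm' ξ (A y x), ha, hSapp]
    have h4 : g' (S x) y = g' y (S x) := hsymm' _ _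
    have h5 : g' (S y) x = g' x (S y) := hsymm' _ _
    have h6 : θ' x * θ' y = θ' y * θ' x := mul_comm _ _
    linarith
  -- main operator identity
  have opid : S ∘ₗ S - S ∘ₗ D + θ'.smulRight w₀ - c • S - A.flip w₀ + D ∘ₗ S = 0 := by
    apply LinearMap.ext
    intro x
    have h1 : S ⁅x, ξ⁆ = A x w₀ - D (S x) := by
      have hh : A ⁅x, ξ⁆ ξ = (A x * A ξ - A ξ * A x) ξ := by rw [repA x ξ]
      simp only [LinearMap.sub_apply, Module.End.mul_apply] at hh; exact hh
    have h2 : (⁅x, ξ⁆ : G) = S x - D x + θ' x • ξ - c • x := by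
      rw [torA x ξ, hSapp]
    rw [h2] at h1
    have h3 : S (S x - D x + θ' x • ξ - c • x)
        = S (S x) - S (D x) + θ' x • w₀ - c • S x := by
      rw [map_sub, map_add, map_sub, map_smul, map_smul, hSξ]
    rw [h3] at h1
    simp only [LinearMap.add_apply, LinearMap.sub_apply, LinearMap.comp_apply,
      LinearMap.smul_apply, LinearMap.zero_apply, LinearMap.smulRight_apply,
      LinearMap.flip_apply]
    linear_combination (norm := module) h1
  have trS : LinearMap.trace ℝ G S = ((n : ℝ) - 1) * c := by
    rw [hS, trAflip ξ, ← hc]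
  have hSD : LinearMap.trace ℝ G (S ∘ₗ D) = LinearMap.trace ℝ G (D ∘ₗ S) := by
    rw [← Module.End.mul_eq_comp, ← Module.End.mul_eq_comp, LinearMap.trace_mul_comm]
  have EQ1 : LinearMap.trace ℝ G (S ∘ₗ S) = ((n : ℝ) - 1) * (c * c) := by
    have h0 := congrArg (LinearMap.trace ℝ G) opid
    rw [map_zero] at h0
    simp only [map_add, map_sub, map_smul, smul_eq_mul] at h0
    rw [lcp_trsr θ' w₀, hθw₀, trAflip w₀, hθw₀, mul_zero] at h0
    have h1 : LinearMap.trace ℝ G (S ∘ₗ S) = c * LinearMap.trace ℝ G S := by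
      linarith
    rw [h1, trS]
    ring
  -- the projection onto the line through k
  set dk : ℝ := g' k k with hdk
  have hdkpos : 0 < dk := hpos' k hkne
  set Pr : G →ₗ[ℝ] G := (g' k).smulRight (dk⁻¹ • k) with hPrdef
  have hPrapp : ∀ x, Pr x = (g' k x) • (dk⁻¹ • k) := fun x => rfl
  have hSk : S k = 0 := by
    rw [hSapp, hAk]
    rfl
  have hPrS : ∀ x, Pr (S x) = 0 := by
    intro x
    rw [hPrapp]
    have h1 : g' k (S x) = 0 := by
      rw [hsymm' k (S x), symS x k, hSk, map_zero, LinearMap.zero_apply]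
    rw [h1, zero_smul]
  have hSPr : ∀ x, S (Pr x) = 0 := by
    intro x
    rw [hPrapp, map_smul, map_smul, hSk, smul_zero, smul_zero]
  have hPrPr : ∀ x, Pr (Pr x) = Pr x := by
    intro x
    conv_lhs => rw [hPrapp x, map_smul, map_smul]
    have h1 : Pr k = k := by
      rw [hPrapp k, smul_smul, ← hdk, mul_inv_cancel₀ (ne_of_gt hdkpos), one_smul]
    rw [h1, hPrapp x]
  have trPr : LinearMap.trace ℝ G Pr = 1 := by
    rw [hPrdef, lcp_trsr, map_smul, smul_eq_mul, ← hdk,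
      inv_mul_cancel₀ (ne_of_gt hdkpos)]
  have symPr : ∀ x y, g' (Pr x) y = g' x (Pr y) := by
    intro x y
    simp only [hPrapp, map_smul, LinearMap.smul_apply, smul_eq_mul]
    rw [hsymm' x k]
    ring
  have symS' : ∀ x y, g' (S x) y = g' x (S y) := by
    intro x y
    rw [symS x y, hsymm']
  -- the operator T := S - c·id + c·Pr is symmetric with trace of square zero
  set T : G →ₗ[ℝ] G := S - c • LinearMap.id + c • Pr with hT
  have hTapp : ∀ x, T x = S x - c • x + c • Pr x := by
    intro x
    simp [hT, LinearMap.sub_apply, LinearMap.add_apply, LinearMap.smul_apply]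
  have symT : ∀ x y, g' (T x) y = g' x (T y) := by
    intro x y
    rw [hTapp x, hTapp y]
    simp only [map_add, map_sub, map_smul, LinearMap.add_apply, LinearMap.sub_apply,
      LinearMap.smul_apply, smul_eq_mul]
    have h1 : c * g' (Pr x) y = c * g' x (Pr y) := by rw [symPr]
    have h2 : g' (S x) y = g' x (S y) := symS' x y
    linarith
  have hTTtr : LinearMap.trace ℝ G (T ∘ₗ T) = 0 := by
    have hTT : T ∘ₗ T = S ∘ₗ S - (2*c) • S + (c*c) • LinearMap.id - (c*c) • Pr := by
      apply LinearMap.ext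
      intro x
      have e0 : T x = S x - c • x + c • Pr x := hTapp x
      have e1 : S (T x) = S (S x) - c • S x := by
        rw [e0, map_add, map_sub, map_smul, map_smul, hSPr x, smul_zero, add_zero]
      have e2 : Pr (T x) = 0 := by
        rw [e0, map_add, map_sub, map_smul, map_smul, hPrS x, hPrPr x]
        abel
      have e3 : (T ∘ₗ T) x = S (T x) - c • (T x) + c • Pr (T x) := hTapp (T x)
      rw [e3, e1, e2, e0, smul_zero, add_zero]
      simp only [LinearMap.sub_apply, LinearMap.add_apply, LinearMap.smul_apply,
        LinearMap.comp_apply, LinearMap.id_apply]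
      module
    rw [hTT]
    simp only [map_add, map_sub, map_smul, smul_eq_mul]
    rw [EQ1, trS, trPr, LinearMap.trace_id]
    push_cast
    ring
  have hTzero : T = 0 := lcp_sym_eq_zero_of_trace_sq hsymm' hpos' symT hTTtr
  have hTξ : T ξ = 0 := by rw [hTzero, LinearMap.zero_apply]
  rw [hTapp ξ] at hTξ
  have hPrξ : Pr ξ = 0 := by
    rw [hPrapp]
    have h1 : g' k ξ = 0 := by
      rw [hsymm' k ξ, hgξ, hθ'k]
    rw [h1, zero_smul]
  rw [hPrξ, smul_zero, add_zero, sub_eq_zero] at hTξ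
  have hw₀c : w₀ = c • ξ := by rw [← hSξ, hTξ]
  have hpos2 : (0:ℝ) < θ' w₀ := by
    rw [hw₀c, map_smul, smul_eq_mul, ← hc]
    exact mul_pos hcpos hcpos
  rw [hθw₀] at hpos2
  exact lt_irrefl 0 hpos2
end Part1
end

section
/- On a Lie algebra 𝔤, for every non-zero proper subspace 𝔲 ⊊ 𝔤, there exists at most one closed 1-form θ for which some metric g makes (g,θ,𝔲) an adapted LCP structure; indeed θ is determined by θ(x) = (1/dim 𝔲)·tr(ad_x|_𝔲). -/
open LinearMap Module
set_option linter.unusedSectionVars false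
set_option maxHeartbeats 1000000

section helpers
variable {V : Type*} [AddCommGroup V] [Module ℝ V] [FiniteDimensional ℝ V]

private lemma lcp_repr_mul_s19 {ι : Type*} [Fintype ι] (B : LinearMap.BilinForm ℝ V)
    (b : Basis ι ℝ V) (hb : B.IsOrthoᵢ b) (x : V) (j : ι) :
    B x (b j) = b.repr x j * B (b j) (b j) := by
  nth_rewrite 1 [← Basis.sum_repr b x]
  rw [map_sum, LinearMap.sum_apply]
  rw [Finset.sum_eq_single j]
  · simp [smul_eq_mul]
  · intro i _ hij
    simp only [map_smul, LinearMap.smul_apply, smul_eq_mul]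
    exact mul_eq_zero_of_right _ (hb hij)
  · intro h; exact absurd (Finset.mem_univ j) h

private lemma lcp_basis (B : LinearMap.BilinForm ℝ V)
    (hsym : ∀ x y : V, B x y = B y x) :
    ∃ b : Basis (Fin (finrank ℝ V)) ℝ V, B.IsOrthoᵢ b := by
  have : Invertible (2 : ℝ) := invertibleOfNonzero (by norm_num)
  exact LinearMap.BilinForm.exists_orthogonal_basis ⟨fun x y => hsym x y⟩

/-- L1 : trace of a skew endomorphism vanishes. -/
private lemma lcp_trace_skew (B : LinearMap.BilinForm ℝ V)
    (hsym : ∀ x y : V, B x y = B y x) (hpos : ∀ x : V, x ≠ 0 → 0 < B x x)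
    (E : V →ₗ[ℝ] V) (hskew : ∀ x y : V, B (E x) y = - B x (E y)) :
    LinearMap.trace ℝ V E = 0 := by
  obtain ⟨b, hb⟩ := lcp_basis B hsym
  rw [LinearMap.trace_eq_matrix_trace ℝ b, Matrix.trace]
  apply Finset.sum_eq_zero
  intro j _
  have hd : B (b j) (b j) ≠ 0 := ne_of_gt (hpos _ (b.ne_zero j))
  have h0 : B (E (b j)) (b j) = 0 := by
    have h1 := hskew (b j) (b j)
    have h2 := hsym (b j) (E (b j))
    linarith
  have h3 := lcp_repr_mul_s19 B b hb (E (b j)) j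
  rw [h0] at h3
  have : b.repr (E (b j)) j = 0 := by
    rcases mul_eq_zero.mp h3.symm with h | h
    · exact h
    · exact absurd h hd
  simpa [Matrix.diag, LinearMap.toMatrix_apply] using this

/-- L4 : for a B-skew endomorphism, trace (A*A) ≤ 0 with equality iff A = 0. -/
private lemma lcp_trace_sq (B : LinearMap.BilinForm ℝ V)
    (hsym : ∀ x y : V, B x y = B y x) (hpos : ∀ x : V, x ≠ 0 → 0 < B x x)
    (A : Module.End ℝ V) (hskew : ∀ x y : V, B (A x) y = - B x (A y)) :
    LinearMap.trace ℝ V (A * A) ≤ 0 ∧ (LinearMap.trace ℝ V (A * A) = 0 → A = 0) := by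
  obtain ⟨b, hb⟩ := lcp_basis B hsym
  have hBnn : ∀ x : V, 0 ≤ B x x := by
    intro x
    rcases eq_or_ne x 0 with h | h
    · simp [h]
    · exact le_of_lt (hpos x h)
  have hd : ∀ j, 0 < B (b j) (b j) := fun j => hpos _ (b.ne_zero j)
  have key : ∀ j, b.repr (A (A (b j))) j * B (b j) (b j) = - B (A (b j)) (A (b j)) := by
    intro j
    rw [← lcp_repr_mul_s19 B b hb (A (A (b j))) j]
    exact hskew (A (b j)) (b j)
  have hnonpos : ∀ j, b.repr (A (A (b j))) j ≤ 0 := by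
    intro j
    by_contra h
    push_neg at h
    have := key j
    nlinarith [hBnn (A (b j)), hd j]
  have htr : LinearMap.trace ℝ V (A * A)
      = ∑ j, b.repr (A (A (b j))) j := by
    rw [LinearMap.trace_eq_matrix_trace ℝ b, Matrix.trace]
    apply Finset.sum_congr rfl
    intro j _
    simp [Matrix.diag, LinearMap.toMatrix_apply, Module.End.mul_apply]
  constructor
  · rw [htr]
    exact Finset.sum_nonpos (fun j _ => hnonpos j)
  · intro h
    rw [htr] at h
    have hz : ∀ j ∈ Finset.univ, b.repr (A (A (b j))) j = 0 :=
      (Finset.sum_eq_zero_iff_of_nonpos (fun j _ => hnonpos j)).mp h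
    apply b.ext
    intro j
    have h1 := key j
    rw [hz j (Finset.mem_univ j)] at h1
    simp only [zero_mul] at h1
    have h2 : B (A (b j)) (A (b j)) = 0 := by linarith
    by_contra hA
    have := hpos _ (show A (b j) ≠ 0 by simpa using hA)
    rw [h2] at this
    exact lt_irrefl 0 this

/-- L2 : conformal diagonal gives trace = c * dim. -/
private lemma lcp_trace_conformal (B : LinearMap.BilinForm ℝ V)
    (hsym : ∀ x y : V, B x y = B y x) (hpos : ∀ x : V, x ≠ 0 → 0 < B x x)
    (E : V →ₗ[ℝ] V) (c : ℝ) (h : ∀ v : V, B (E v) v = c * B v v) :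
    LinearMap.trace ℝ V E = c * (finrank ℝ V : ℝ) := by
  have hpol : ∀ x y : V, B (E x) y + B (E y) x = 2 * c * B x y := by
    intro x y
    have h1 := h (x + y)
    have h2 := h x
    have h3 := h y
    simp only [map_add, LinearMap.add_apply] at h1
    have hc : c * (B x y) = c * (B y x) := by rw [hsym x y]
    linarith
  set E' : V →ₗ[ℝ] V := E - c • LinearMap.id with hE'
  have hskew : ∀ x y : V, B (E' x) y = - B x (E' y) := by
    intro x y
    have h1 := hpol x y
    have h2 := hsym x (E y)
    simp only [hE', LinearMap.sub_apply, LinearMap.smul_apply, LinearMap.id_apply,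
      map_sub, map_smul, LinearMap.sub_apply, LinearMap.smul_apply, smul_eq_mul]
    have h3 := hsym x y
    linarith
  have h0 := lcp_trace_skew B hsym hpos E' hskew
  have : LinearMap.trace ℝ V E' = LinearMap.trace ℝ V E - c * (finrank ℝ V : ℝ) := by
    rw [hE', map_sub, map_smul, LinearMap.trace_id, smul_eq_mul]
  rw [this] at h0
  linarith

end helpers
section L5
variable {V W : Type*} [AddCommGroup V] [Module ℝ V] [FiniteDimensional ℝ V]
  [AddCommGroup W] [Module ℝ W] [FiniteDimensional ℝ W]

private lemma lcp_rep_vanish (B : LinearMap.BilinForm ℝ V)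
    (hsym : ∀ x y : V, B x y = B y x) (hpos : ∀ x : V, x ≠ 0 → 0 < B x x)
    (BW : LinearMap.BilinForm ℝ W)
    (hsymW : ∀ x y : W, BW x y = BW y x) (hposW : ∀ x : W, x ≠ 0 → 0 < BW x x)
    (F : V →ₗ[ℝ] Module.End ℝ W)
    (hFskew : ∀ (v : V) (x y : W), BW (F v x) y = - BW x (F v y))
    (L : V →ₗ[ℝ] V) (hL : ∀ u v : V, B (L u) v + B u (L v) = 2 * B u v)
    (hcomm : ∀ u v : V, LinearMap.trace ℝ W (F (L u) * F v)
        + LinearMap.trace ℝ W (F u * F (L v)) = 0) :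
    F = 0 := by
  obtain ⟨b, hb⟩ := lcp_basis B hsym
  set q : V → V → ℝ := fun u v => LinearMap.trace ℝ W (F u * F v) with hq
  have hqsym : ∀ u v : V, q u v = q v u := fun u v => LinearMap.trace_mul_comm ℝ (F u) (F v)
  have hqneg : ∀ u : V, q u u ≤ 0 := fun u =>
    (lcp_trace_sq BW hsymW hposW (F u) (hFskew u)).1
  have hdiagL : ∀ u : V, q (L u) u = 0 := by
    intro u
    have h1 := hcomm u u
    have h2 := hqsym u (L u)
    simp only [hq] at *
    linarith
  set s : V →ₗ[ℝ] V := L - LinearMap.id with hs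
  have hsskew : ∀ x y : V, B (s x) y = - B x (s y) := by
    intro x y
    have h1 := hL x y
    simp only [hs, LinearMap.sub_apply, LinearMap.id_apply, map_sub, LinearMap.sub_apply]
    have h2 := hsym x y
    linarith
  have hq0 : ∀ u : V, q u u = - q (s u) u := by
    intro u
    have h1 : q (L u) u = q (s u) u + q u u := by
      have hLu : L u = s u + u := by simp [hs]
      rw [hLu]
      simp only [hq, map_add, add_mul, map_add]
    rw [hdiagL u] at h1
    linarith
  set d : _ → ℝ := fun j => B (b j) (b j) with hdd
  have hd : ∀ j, 0 < d j := fun j => hpos _ (b.ne_zero j)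
  set c : _ → _ → ℝ := fun k j => b.repr (s (b j)) k with hc
  have hrel : ∀ j k, c k j * d k = - (c j k * d j) := by
    intro j k
    have h1 : B (s (b j)) (b k) = c k j * d k := lcp_repr_mul_s19 B b hb _ k
    have h2 : B (s (b k)) (b j) = c j k * d j := lcp_repr_mul_s19 B b hb _ j
    have h3 := hsskew (b j) (b k)
    have h4 := hsym (b j) (s (b k))
    linarith
  have hexp : ∀ j, q (s (b j)) (b j) = ∑ k, c k j * q (b k) (b j) := by
    intro j
    have h1 : s (b j) = ∑ k, c k j • b k := (Basis.sum_repr b (s (b j))).symm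
    calc q (s (b j)) (b j)
        = LinearMap.trace ℝ W ((∑ k, c k j • F (b k)) * F (b j)) := by
          rw [hq]
          simp only []
          rw [h1, map_sum]
          simp_rw [map_smul]
      _ = ∑ k, c k j * q (b k) (b j) := by
          rw [Finset.sum_mul]
          simp_rw [smul_mul_assoc]
          rw [map_sum]
          simp_rw [map_smul, smul_eq_mul]
          rfl
  set f : _ → _ → ℝ := fun j k => (d j)⁻¹ * (c k j * q (b k) (b j)) with hf
  have hfskew : ∀ j k, f j k = - f k j := by
    intro j k
    have h1 := hrel j k
    have h2 : q (b j) (b k) = q (b k) (b j) := hqsym (b j) (b k)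
    have hdj := (hd j).ne'
    have hdk := (hd k).ne'
    simp only [hf]
    rw [h2]
    field_simp
    linear_combination q (b k) (b j) * h1
  have hS : (∑ j, ∑ k, f j k) = 0 := by
    have h0 : (∑ j, ∑ k, f j k) = ∑ j, ∑ k, (-(f k j)) :=
      Finset.sum_congr rfl (fun j _ => Finset.sum_congr rfl (fun k _ => hfskew j k))
    have h1 : (∑ j, ∑ k, (-(f k j))) = - ∑ j, ∑ k, f k j := by
      simp [Finset.sum_neg_distrib]
    have h2 : (∑ j, ∑ k, f k j) = ∑ k, ∑ j, f k j := Finset.sum_comm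
    have := h0.trans (h1.trans (by rw [h2]))
    linarith
  have hsum0 : (∑ j, (d j)⁻¹ * q (b j) (b j)) = 0 := by
    have heq : ∀ j, (d j)⁻¹ * q (b j) (b j) = - ((d j)⁻¹ * q (s (b j)) (b j)) := by
      intro j
      rw [hq0 (b j)]
      ring
    have heq2 : ∀ j, (d j)⁻¹ * q (s (b j)) (b j) = ∑ k, f j k := by
      intro j
      rw [hexp j, Finset.mul_sum]
    calc (∑ j, (d j)⁻¹ * q (b j) (b j))
        = ∑ j, - ((d j)⁻¹ * q (s (b j)) (b j)) := Finset.sum_congr rfl (fun j _ => heq j)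
      _ = - ∑ j, ∑ k, f j k := by
          rw [← Finset.sum_neg_distrib]
          exact Finset.sum_congr rfl (fun j _ => by rw [heq2 j])
      _ = 0 := by rw [hS]; ring
  have hterm : ∀ j, q (b j) (b j) = 0 := by
    have hnp : ∀ j ∈ Finset.univ, (d j)⁻¹ * q (b j) (b j) ≤ 0 := by
      intro j _
      have := hqneg (b j)
      have h2 := inv_pos.mpr (hd j)
      nlinarith
    intro j
    have hz := (Finset.sum_eq_zero_iff_of_nonpos hnp).mp hsum0 j (Finset.mem_univ j)
    have h2 := inv_pos.mpr (hd j)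
    rcases mul_eq_zero.mp hz with h | h
    · exact absurd h (ne_of_gt h2)
    · exact h
  apply b.ext
  intro j
  have := (lcp_trace_sq BW hsymW hposW (F (b j)) (hFskew (b j))).2 (hterm j)
  simp [this]
end L5
section aux
open LinearMap Module LinearMap.BilinForm
variable {G : Type*} [LieRing G] [LieAlgebra ℝ G] [FiniteDimensional ℝ G]

/-- infrastructure: complement of any subspace wrt a positive definite form -/
private lemma lcp_compl (g : LinearMap.BilinForm ℝ G)
    (hsymm : ∀ x y : G, g x y = g y x)
    (hpos : ∀ x : G, x ≠ 0 → 0 < g x x) (W : Submodule ℝ G) :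
    IsCompl W (LinearMap.BilinForm.orthogonal g W) := by
  apply LinearMap.BilinForm.isCompl_orthogonal_of_restrict_nondegenerate
  · intro x y hxy
    rw [hsymm]; exact hxy
  · refine ⟨fun m hm => ?_, fun m hm => ?_⟩
    all_goals
      by_contra h0
      have hx : (m : G) ≠ 0 := fun hc => h0 (Subtype.ext hc)
      have := hpos _ hx
      have h2 := hm m
      simp only [LinearMap.BilinForm.restrict_apply, LinearMap.domRestrict_apply] at h2
      rw [h2] at this
      exact lt_irrefl 0 this

private lemma lcp_torsion (g : LinearMap.BilinForm ℝ G)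
    (hsymm : ∀ x y : G, g x y = g y x)
    (hpos : ∀ x : G, x ≠ 0 → 0 < g x x)
    (θ : G →ₗ[ℝ] ℝ) (N : G →ₗ[ℝ] Module.End ℝ G)
    (hN : ∀ x y z : G, g (N x y) z =
      (g ⁅x, y⁆ z - g ⁅x, z⁆ y - g ⁅y, z⁆ x) / 2
        + θ x * g y z + θ y * g x z - θ z * g x y) :
    ∀ a b : G, N a b - N b a = ⁅a, b⁆ := by
  intro a b
  have key : ∀ z : G, g (N a b - N b a - ⁅a, b⁆) z = 0 := by
    intro z
    have e1 := hN a b z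
    have e2 := hN b a z
    have hba : g ⁅b, a⁆ z = - g ⁅a, b⁆ z := by
      have : (⁅b, a⁆ : G) = -⁅a, b⁆ := by rw [← lie_skew]
      rw [this, map_neg, LinearMap.neg_apply]
    have hab := hsymm a b
    have : g (N a b) z - g (N b a) z - g ⁅a, b⁆ z = 0 := by
      rw [e1, e2, hba, hab]; ring
    simpa [map_sub, LinearMap.sub_apply] using this
  have h0 := key (N a b - N b a - ⁅a, b⁆)
  by_contra hne
  have : N a b - N b a - ⁅a, b⁆ ≠ 0 := fun hc => hne (by
    have := sub_eq_zero.mp hc; exact this)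
  have := hpos _ this
  rw [h0] at this
  exact lt_irrefl 0 this

private lemma lcp_metric (g : LinearMap.BilinForm ℝ G)
    (hsymm : ∀ x y : G, g x y = g y x)
    (θ : G →ₗ[ℝ] ℝ) (N : G →ₗ[ℝ] Module.End ℝ G)
    (hN : ∀ x y z : G, g (N x y) z =
      (g ⁅x, y⁆ z - g ⁅x, z⁆ y - g ⁅y, z⁆ x) / 2
        + θ x * g y z + θ y * g x z - θ z * g x y) :
    ∀ a y z : G, g (N a y) z + g y (N a z) = 2 * θ a * g y z := by
  intro a y z
  have e1 := hN a y z
  have e2 := hN a z y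
  have hzy : g ⁅z, y⁆ a = - g ⁅y, z⁆ a := by
    have : (⁅z, y⁆ : G) = -⁅y, z⁆ := by rw [← lie_skew]
    rw [this, map_neg, LinearMap.neg_apply]
  have h1 : g y (N a z) = g (N a z) y := hsymm _ _
  rw [h1, e1, e2, hzy, hsymm z y, hsymm a z, hsymm a y]
  ring
end aux
section tracef
open LinearMap Module LinearMap.BilinForm
variable {G : Type*} [LieRing G] [LieAlgebra ℝ G] [FiniteDimensional ℝ G]

private lemma lcp_trace_formula (g : LinearMap.BilinForm ℝ G)
    (hsymm : ∀ x y : G, g x y = g y x)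
    (hpos : ∀ x : G, x ≠ 0 → 0 < g x x)
    (θ : G →ₗ[ℝ] ℝ)
    (U : Submodule ℝ G)
    (N : G →ₗ[ℝ] Module.End ℝ G)
    (hN : ∀ x y z : G, g (N x y) z =
      (g ⁅x, y⁆ z - g ⁅x, z⁆ y - g ⁅y, z⁆ x) / 2
        + θ x * g y z + θ y * g x z - θ z * g x y)
    (hUsub : ∀ u ∈ U, ∀ v ∈ U, ⁅u, v⁆ ∈ U)
    (h2 : ∀ u ∈ U, ∀ x ∈ LinearMap.BilinForm.orthogonal g U,
      g ⁅u, x⁆ x = θ u * g x x ∧ g ⁅x, u⁆ u = θ x * g u u)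
    (hpar : ∀ x : G, ∀ u ∈ U, N x u ∈ U)
    (hrep : ∀ x y : G, ∀ u ∈ U, N ⁅x, y⁆ u = N x (N y u) - N y (N x u))
    (hadapt : ∀ u ∈ U, θ u = 0)
    (x : G) (T : ↥U →ₗ[ℝ] ↥U) (hT : ∀ v : U, (T v : G) = ⁅x, (v : G)⁆) :
    LinearMap.trace ℝ ↥U T = θ x * (finrank ℝ ↥U : ℝ) := by
  -- the restricted form on U
  set BU : LinearMap.BilinForm ℝ ↥U := g.restrict U with hBU
  have hBUapp : ∀ v w : ↥U, BU v w = g ↑v ↑w := by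
    intro v w; simp [hBU, LinearMap.BilinForm.restrict_apply]
  have hBUsymm : ∀ v w : ↥U, BU v w = BU w v := by
    intro v w; rw [hBUapp, hBUapp]; exact hsymm _ _
  have hBUpos : ∀ v : ↥U, v ≠ 0 → 0 < BU v v := by
    intro v hv
    rw [hBUapp]
    exact hpos _ (fun hc => hv (Subtype.ext hc))
  -- decomposition of x
  have hUP := lcp_compl g hsymm hpos U
  set prU : G →ₗ[ℝ] ↥U := U.linearProjOfIsCompl _ hUP with hprU
  have hdecomp : ∀ y : G, y - ↑(prU y) ∈ LinearMap.BilinForm.orthogonal g U := by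
    intro y
    have h := Submodule.projection_add_projection_eq_self hUP y
    have h2 : y - ↑(prU y) =
        ↑((LinearMap.BilinForm.orthogonal g U).linearProjOfIsCompl U hUP.symm y) :=
      sub_eq_iff_eq_add'.mpr h.symm
    rw [h2]
    exact Submodule.coe_mem _
  set v0 : ↥U := prU x with hv0
  set pc : G := x - ↑v0 with hpc
  have hpcP : pc ∈ LinearMap.BilinForm.orthogonal g U := hdecomp x
  -- torsion and metric facts
  have tors := lcp_torsion g hsymm hpos θ N hN
  have metric := lcp_metric g hsymm θ N hN
  -- T₀ : bracket with v0
  set T₀ : ↥U →ₗ[ℝ] ↥U :=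
    (LieAlgebra.ad ℝ G (↑v0 : G)).restrict (fun u hu => hUsub _ v0.2 _ hu) with hT₀
  have hT₀coe : ∀ v : ↥U, (T₀ v : G) = ⁅(↑v0 : G), (v : G)⁆ := by
    intro v
    rfl
  set T₁ : ↥U →ₗ[ℝ] ↥U := T - T₀ with hT₁
  have hT₁coe : ∀ v : ↥U, (T₁ v : G) = ⁅pc, (v : G)⁆ := by
    intro v
    rw [hT₁]
    simp only [LinearMap.sub_apply, Submodule.coe_sub, hT v, hT₀coe v, hpc, sub_lie]
  -- trace of T₁
  have htrT₁ : LinearMap.trace ℝ ↥U T₁ = θ pc * (finrank ℝ ↥U : ℝ) := by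
    apply lcp_trace_conformal BU hBUsymm hBUpos
    intro v
    rw [hBUapp, hBUapp, hT₁coe v]
    exact (h2 ↑v v.2 pc hpcP).2
  -- the kernel of the restricted connection
  set Φ : G →ₗ[ℝ] (↥U →ₗ[ℝ] G) :=
    { toFun := fun y => (N y) ∘ₗ U.subtype
      map_add' := by intro y z; ext v; simp
      map_smul' := by intro c y; ext v; simp } with hΦ
  have hΦapp : ∀ (y : G) (v : ↥U), Φ y v = N y ↑v := by intro y v; rfl
  set K₂ : Submodule ℝ G := U ⊓ LinearMap.ker Φ with hK₂
  have hK₂U : K₂ ≤ U := inf_le_left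
  have hK₂mem : ∀ y ∈ K₂, ∀ v : ↥U, N y ↑v = 0 := by
    intro y hy v
    have h := (Submodule.mem_inf.mp hy).2
    rw [LinearMap.mem_ker] at h
    rw [← hΦapp, h]
    rfl
  have hKc := lcp_compl g hsymm hpos K₂
  set prK : G →ₗ[ℝ] ↥K₂ := K₂.linearProjOfIsCompl _ hKc with hprKdef
  have hdecompK : ∀ y : G, y - ↑(prK y) ∈ LinearMap.BilinForm.orthogonal g K₂ := by
    intro y
    have h := Submodule.projection_add_projection_eq_self hKc y
    have h2 : y - ↑(prK y) =
        ↑((LinearMap.BilinForm.orthogonal g K₂).linearProjOfIsCompl K₂ hKc.symm y) :=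
      sub_eq_iff_eq_add'.mpr h.symm
    rw [h2]
    exact Submodule.coe_mem _
  have hprKg : ∀ (y : G) (k : ↥K₂), g ↑(prK y) ↑k = g y ↑k := by
    intro y k
    have h := hdecompK y
    have h2 := (LinearMap.BilinForm.mem_orthogonal_iff.mp h) ↑k k.2
    have h3 : g (y - ↑(prK y)) ↑k = 0 := by
      rw [hsymm]; exact h2
    have h4 : g y ↑k - g ↑(prK y) ↑k = 0 := by
      simpa [map_sub, LinearMap.sub_apply] using h3
    linarith
  set M₂ : Submodule ℝ G := U ⊓ LinearMap.BilinForm.orthogonal g K₂ with hM₂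
  set ιK : ↥K₂ →ₗ[ℝ] ↥U := Submodule.inclusion hK₂U with hιK
  set ιM : ↥M₂ →ₗ[ℝ] ↥U := Submodule.inclusion inf_le_left with hιM
  have hqMmem : ∀ u : ↥U,
      (U.subtype - (K₂.subtype ∘ₗ prK ∘ₗ U.subtype)) u ∈ M₂ := by
    intro u
    refine Submodule.mem_inf.mpr ⟨?_, ?_⟩
    · simpa using sub_mem u.2 (hK₂U (prK ↑u).2)
    · simpa using hdecompK ↑u
  set qM : ↥U →ₗ[ℝ] ↥M₂ :=
    LinearMap.codRestrict M₂ (U.subtype - (K₂.subtype ∘ₗ prK ∘ₗ U.subtype)) hqMmem with hqM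
  have hqMcoe : ∀ u : ↥U, (qM u : G) = ↑u - ↑(prK ↑u) := by
    intro u
    rw [hqM, LinearMap.codRestrict_apply]
    simp
  set p1 : ↥U →ₗ[ℝ] ↥U := ιK ∘ₗ prK ∘ₗ U.subtype with hp1
  set p2 : ↥U →ₗ[ℝ] ↥U := ιM ∘ₗ qM with hp2
  have hp1coe : ∀ u : ↥U, (p1 u : G) = ↑(prK ↑u) := by
    intro u; simp [hp1, hιK, Submodule.coe_inclusion]
  have hp2coe : ∀ u : ↥U, (p2 u : G) = ↑u - ↑(prK ↑u) := by
    intro u; simp [hp2, hιM, Submodule.coe_inclusion, hqMcoe]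
  have hsplit : T₀ = T₀ ∘ₗ p1 + T₀ ∘ₗ p2 := by
    ext v
    have : p1 v + p2 v = v := by
      apply Subtype.ext
      simp [hp1coe, hp2coe]
    simp only [LinearMap.add_apply, LinearMap.comp_apply]
    rw [← map_add, this]
  -- trace of first piece vanishes
  have htr1 : LinearMap.trace ℝ ↥U (T₀ ∘ₗ p1) = 0 := by
    have hre : T₀ ∘ₗ p1 = (T₀ ∘ₗ ιK) ∘ₗ (prK ∘ₗ U.subtype) := by
      rw [hp1]; ext v; simp
    rw [hre, ← LinearMap.trace_comp_comm']
    set E₁ : ↥K₂ →ₗ[ℝ] ↥K₂ := (prK ∘ₗ U.subtype) ∘ₗ (T₀ ∘ₗ ιK) with hE₁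
    have hE₁coe : ∀ k : ↥K₂, (E₁ k : G) = ↑(prK (⁅(↑v0 : G), (↑k : G)⁆)) := by
      intro k
      simp only [hE₁, LinearMap.comp_apply, Submodule.coe_subtype]
      congr 1
    set BK : LinearMap.BilinForm ℝ ↥K₂ := g.restrict K₂ with hBK
    have hBKapp : ∀ v w : ↥K₂, BK v w = g ↑v ↑w := by
      intro v w; simp [hBK, LinearMap.BilinForm.restrict_apply]
    apply lcp_trace_skew BK
      (fun v w => by rw [hBKapp, hBKapp]; exact hsymm _ _)
      (fun v hv => by rw [hBKapp]; exact hpos _ (fun hc => hv (Subtype.ext hc)))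
    intro k k'
    rw [hBKapp, hBKapp, hE₁coe, hE₁coe]
    have hbrk : ∀ m : ↥K₂, (⁅(↑v0 : G), (↑m : G)⁆ : G) = N (↑v0 : G) ↑m := by
      intro m
      have h1 := tors (↑v0 : G) ↑m
      have h2 : N ↑m (↑v0 : G) = 0 := hK₂mem ↑m m.2 v0
      rw [← h1, h2]
      simp
    have ha : g ↑(prK (⁅(↑v0:G), (↑k:G)⁆)) ↑k' = g (N (↑v0:G) ↑k) ↑k' := by
      rw [hprKg, hbrk k]
    have hb : g ↑k ↑(prK (⁅(↑v0:G), (↑k':G)⁆)) = g (N (↑v0:G) ↑k') ↑k := by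
      rw [hsymm, hprKg, hbrk k']
    rw [ha, hb]
    have hm := metric (↑v0 : G) ↑k ↑k'
    rw [hadapt _ v0.2] at hm
    have hc : g ↑k (N (↑v0:G) ↑k') = g (N (↑v0:G) ↑k') ↑k := hsymm _ _
    linarith
  -- trace of second piece vanishes
  have htr2 : LinearMap.trace ℝ ↥U (T₀ ∘ₗ p2) = 0 := by
    have hre : T₀ ∘ₗ p2 = (T₀ ∘ₗ ιM) ∘ₗ qM := by
      rw [hp2]; ext v; simp
    rw [hre, ← LinearMap.trace_comp_comm']
    set E₂ : ↥M₂ →ₗ[ℝ] ↥M₂ := qM ∘ₗ (T₀ ∘ₗ ιM) with hE₂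
    -- the restricted connection operators
    set μ : G → Module.End ℝ ↥U := fun y => (N y).restrict (hpar y) with hμ
    have hμcoe : ∀ (y : G) (v : ↥U), (μ y v : G) = N y ↑v := by
      intro y v; rw [hμ]; exact LinearMap.restrict_coe_apply _ _ _
    have hμsub : ∀ y z : G, μ (y - z) = μ y - μ z := by
      intro y z; ext v
      simp only [LinearMap.sub_apply, Submodule.coe_sub, hμcoe, map_sub, LinearMap.sub_apply]
    have hμK : ∀ y ∈ K₂, μ y = 0 := by
      intro y hy; ext v
      simp [hμcoe, hK₂mem y hy v]
    have hμflat : ∀ a b : G, μ ⁅a, b⁆ = μ a * μ b - μ b * μ a := by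
      intro a b; ext v
      simp only [LinearMap.sub_apply, Submodule.coe_sub, hμcoe, Module.End.mul_apply]
      rw [hrep a b ↑v v.2]
    have hμskew : ∀ y : G, θ y = 0 → ∀ v w : ↥U, BU (μ y v) w = - BU v (μ y w) := by
      intro y hy v w
      rw [hBUapp, hBUapp, hμcoe, hμcoe]
      have hm := metric y ↑v ↑w
      rw [hy] at hm
      linarith
    -- the auxiliary form on M₂
    have hμadd' : ∀ m n : ↥M₂, μ (↑(m + n) : G) = μ ↑m + μ ↑n := by
      intro m n
      have hc : ((m + n : ↥M₂) : G) = ↑m + ↑n := rfl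
      rw [hc]; ext v
      simp only [LinearMap.add_apply, Submodule.coe_add, hμcoe, map_add, LinearMap.add_apply]
    have hμsmul' : ∀ (c : ℝ) (m : ↥M₂), μ (↑(c • m) : G) = c • μ ↑m := by
      intro c m
      have hc : ((c • m : ↥M₂) : G) = c • (↑m : G) := rfl
      rw [hc]; ext v
      simp only [LinearMap.smul_apply, Submodule.coe_smul, hμcoe, map_smul, LinearMap.smul_apply]
    set B' : LinearMap.BilinForm ℝ ↥M₂ := LinearMap.mk₂ ℝ
      (fun m m' => - LinearMap.trace ℝ ↥U (μ ↑m * μ ↑m'))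
      (by
        intro m n m'
        show - LinearMap.trace ℝ ↥U (μ ↑(m + n) * μ ↑m')
            = - LinearMap.trace ℝ ↥U (μ ↑m * μ ↑m') + - LinearMap.trace ℝ ↥U (μ ↑n * μ ↑m')
        rw [hμadd', add_mul, map_add]; ring)
      (by
        intro c m m'
        show - LinearMap.trace ℝ ↥U (μ ↑(c • m) * μ ↑m')
            = c • (- LinearMap.trace ℝ ↥U (μ ↑m * μ ↑m'))
        rw [hμsmul', smul_mul_assoc, map_smul, smul_eq_mul, smul_eq_mul]; ring)
      (by
        intro m m' n'
        show - LinearMap.trace ℝ ↥U (μ ↑m * μ ↑(m' + n'))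
            = - LinearMap.trace ℝ ↥U (μ ↑m * μ ↑m') + - LinearMap.trace ℝ ↥U (μ ↑m * μ ↑n')
        rw [hμadd', mul_add, map_add]; ring)
      (by
        intro c m m'
        show - LinearMap.trace ℝ ↥U (μ ↑m * μ ↑(c • m'))
            = c • (- LinearMap.trace ℝ ↥U (μ ↑m * μ ↑m'))
        rw [hμsmul', mul_smul_comm, map_smul, smul_eq_mul, smul_eq_mul]; ring) with hB'
    have hB'app : ∀ m m' : ↥M₂,
        B' m m' = - LinearMap.trace ℝ ↥U (μ ↑m * μ ↑m') := by
      intro m m'; rfl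
    have hμM : ∀ m : ↥M₂, θ (↑m : G) = 0 := fun m => hadapt _ (Submodule.mem_inf.mp m.2).1
    have hB'symm : ∀ m m' : ↥M₂, B' m m' = B' m' m := by
      intro m m'
      rw [hB'app, hB'app, LinearMap.trace_mul_comm]
    have hB'pos : ∀ m : ↥M₂, m ≠ 0 → 0 < B' m m := by
      intro m hm
      have hsq := lcp_trace_sq BU hBUsymm hBUpos (μ ↑m) (hμskew ↑m (hμM m))
      rcases lt_or_eq_of_le hsq.1 with h | h
      · rw [hB'app]; linarith
      · exfalso
        have hμ0 := hsq.2 h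
        have hK : (↑m : G) ∈ K₂ := by
          refine Submodule.mem_inf.mpr ⟨(Submodule.mem_inf.mp m.2).1, ?_⟩
          rw [LinearMap.mem_ker]
          ext v
          have : N (↑m : G) ↑v = (μ ↑m v : G) := (hμcoe ↑m v).symm
          rw [hΦapp, this, hμ0]
          rfl
        have horth := (Submodule.mem_inf.mp m.2).2
        have h0 := (LinearMap.BilinForm.mem_orthogonal_iff.mp horth) ↑m hK
        have : (↑m : G) ≠ 0 := fun hc => hm (Subtype.ext hc)
        have := hpos _ this
        rw [h0] at this
        exact lt_irrefl 0 this
    apply lcp_trace_skew B' hB'symm (fun m hm => hB'pos m hm)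
    intro m m'
    have hE₂μ : ∀ n : ↥M₂, μ (↑(E₂ n) : G) = μ (↑v0 : G) * μ ↑n - μ ↑n * μ (↑v0 : G) := by
      intro n
      have hcoe : (↑(E₂ n) : G) = ↑(T₀ (ιM n)) - ↑(prK ↑(T₀ (ιM n))) := by
        simp only [hE₂, LinearMap.comp_apply]
        rw [hqMcoe]
      rw [hcoe, hμsub, hμK _ (prK _).2, sub_zero]
      have : (↑(T₀ (ιM n)) : G) = ⁅(↑v0 : G), (↑n : G)⁆ := by
        rw [hT₀coe]
        congr 1
      rw [this, hμflat]
    rw [hB'app, hB'app, hE₂μ m, hE₂μ m']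
    have hcyc := LinearMap.trace_mul_comm ℝ (μ (↑v0 : G)) (μ ↑m * μ ↑m')
    simp only [sub_mul, mul_sub, map_sub, mul_assoc] at *
    linarith
  -- assemble
  have htrT₀ : LinearMap.trace ℝ ↥U T₀ = 0 := by
    rw [hsplit, map_add, htr1, htr2, add_zero]
  have hTsum : T = T₀ + T₁ := by rw [hT₁]; abel
  have hθx : θ x = θ pc := by
    have : θ (↑v0 : G) = 0 := hadapt _ v0.2
    rw [hpc, map_sub, this, sub_zero]
  rw [hTsum, map_add, htrT₀, htrT₁, zero_add, hθx]
end tracef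
section adinv
open LinearMap Module LinearMap.BilinForm
variable {G : Type*} [LieRing G] [LieAlgebra ℝ G] [FiniteDimensional ℝ G]

private lemma lcp_ad_invariant (g : LinearMap.BilinForm ℝ G)
    (hsymm : ∀ x y : G, g x y = g y x)
    (hpos : ∀ x : G, x ≠ 0 → 0 < g x x)
    (θ : G →ₗ[ℝ] ℝ) (hθ : θ ≠ 0) (hclosed : ∀ x y : G, θ ⁅x, y⁆ = 0)
    (U : Submodule ℝ G)
    (hUsub : ∀ u ∈ U, ∀ v ∈ U, ⁅u, v⁆ ∈ U)
    (hPsub : ∀ x ∈ LinearMap.BilinForm.orthogonal g U,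
             ∀ y ∈ LinearMap.BilinForm.orthogonal g U,
             ⁅x, y⁆ ∈ LinearMap.BilinForm.orthogonal g U)
    (h2 : ∀ u ∈ U, ∀ x ∈ LinearMap.BilinForm.orthogonal g U,
      g ⁅u, x⁆ x = θ u * g x x ∧ g ⁅x, u⁆ u = θ x * g u u)
    (hadapt : ∀ u ∈ U, θ u = 0) :
    ∀ x : G, ∀ u ∈ U, ⁅x, u⁆ ∈ U := by
  set P : Submodule ℝ G := LinearMap.BilinForm.orthogonal g U with hP
  have hUP := lcp_compl g hsymm hpos U
  set prU : G →ₗ[ℝ] ↥U := U.linearProjOfIsCompl _ hUP with hprU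
  set pP : G →ₗ[ℝ] G := LinearMap.id - U.subtype ∘ₗ prU with hpPdef
  have hpPapp : ∀ y : G, pP y = y - ↑(prU y) := by
    intro y; simp [hpPdef]
  have hpPmem : ∀ y : G, pP y ∈ P := by
    intro y
    rw [hpPapp]
    have h := Submodule.projection_add_projection_eq_self hUP y
    have h2' : y - ↑(prU y) = ↑(P.linearProjOfIsCompl U hUP.symm y) :=
      sub_eq_iff_eq_add'.mpr h.symm
    rw [h2']
    exact Submodule.coe_mem _
  have hUpart : ∀ y : G, y - pP y ∈ U := by
    intro y
    rw [hpPapp]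
    have : y - (y - ↑(prU y)) = ↑(prU y) := by abel
    rw [this]
    exact Submodule.coe_mem _
  have hpPU : ∀ y ∈ U, pP y = 0 := by
    intro y hy
    rw [hpPapp]
    have : prU y = ⟨y, hy⟩ := by
      have := Submodule.linearProjOfIsCompl_apply_left hUP ⟨y, hy⟩
      exact this
    rw [this]
    simp
  have hpPP : ∀ y ∈ P, pP y = y := by
    intro y hy
    rw [hpPapp]
    have : prU y = 0 := Submodule.linearProjOfIsCompl_apply_right' hUP hy
    rw [this]
    simp
  have hPg : ∀ w ∈ P, ∀ u ∈ U, g u w = 0 := by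
    intro w hw u hu
    exact (LinearMap.BilinForm.mem_orthogonal_iff.mp hw) u hu
  -- polarized identities
  have pol1 : ∀ u ∈ U, ∀ p ∈ P, ∀ q ∈ P, g ⁅u, p⁆ q + g ⁅u, q⁆ p = 0 := by
    intro u hu p hp q hq
    have h := (h2 u hu _ (add_mem hp hq)).1
    have ha := (h2 u hu p hp).1
    have hb := (h2 u hu q hq).1
    rw [hadapt u hu] at h ha hb
    simp only [zero_mul] at h ha hb
    simp only [lie_add, map_add, LinearMap.add_apply] at h
    linarith
  have pol2 : ∀ a ∈ P, ∀ u ∈ U, ∀ v ∈ U,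
      g ⁅a, u⁆ v + g ⁅a, v⁆ u = 2 * θ a * g u v := by
    intro a ha u hu v hv
    have h := (h2 _ (add_mem hu hv) a ha).2
    have h1 := (h2 u hu a ha).2
    have h1' := (h2 v hv a ha).2
    simp only [lie_add, map_add, LinearMap.add_apply] at h
    have hsy := hsymm u v
    have hc : θ a * g v u = θ a * g u v := by rw [hsy]
    linarith [h, h1, h1', hc]
  -- a direction transverse to ker θ inside P
  have hex : ∃ p ∈ P, θ p ≠ 0 := by
    by_contra h
    push_neg at h
    apply hθ
    ext y
    have h1 : θ (y - pP y) = 0 := hadapt _ (hUpart y)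
    have h2' : θ (pP y) = 0 := h _ (hpPmem y)
    have : θ y = θ (y - pP y) + θ (pP y) := by rw [← map_add]; congr 1; abel
    rw [this, h1, h2']
    simp
  obtain ⟨x0, hx0P, hx0⟩ := hex
  set K : Submodule ℝ G := P ⊓ LinearMap.ker θ with hK
  have hKP : K ≤ P := inf_le_left
  have hKθ : ∀ k ∈ K, θ k = 0 := by
    intro k hk
    exact LinearMap.mem_ker.mp (Submodule.mem_inf.mp hk).2
  have hKc := lcp_compl g hsymm hpos K
  set prKK : G →ₗ[ℝ] ↥K := K.linearProjOfIsCompl _ hKc with hprKK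
  have hdecompK : ∀ y : G, y - ↑(prKK y) ∈ LinearMap.BilinForm.orthogonal g K := by
    intro y
    have h := Submodule.projection_add_projection_eq_self hKc y
    have h2' : y - ↑(prKK y) =
        ↑((LinearMap.BilinForm.orthogonal g K).linearProjOfIsCompl K hKc.symm y) :=
      sub_eq_iff_eq_add'.mpr h.symm
    rw [h2']
    exact Submodule.coe_mem _
  set a0 : G := x0 - ↑(prKK x0) with ha0
  have ha0P : a0 ∈ P := by
    rw [ha0]
    exact sub_mem hx0P (hKP (prKK x0).2)
  have ha0θ : θ a0 = θ x0 := by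
    rw [ha0, map_sub, hKθ _ (prKK x0).2, sub_zero]
  have ha0K : a0 ∈ LinearMap.BilinForm.orthogonal g K := hdecompK x0
  set a : G := (θ a0)⁻¹ • a0 with ha
  have ha0ne : θ a0 ≠ 0 := by rw [ha0θ]; exact hx0
  have haP : a ∈ P := Submodule.smul_mem _ _ ha0P
  have haθ : θ a = 1 := by
    rw [ha, map_smul, smul_eq_mul, inv_mul_cancel₀ ha0ne]
  have haK : ∀ k ∈ K, g k a = 0 := by
    intro k hk
    have h := (LinearMap.BilinForm.mem_orthogonal_iff.mp
      (Submodule.smul_mem _ ((θ a0)⁻¹) ha0K)) k hk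
    exact h
  -- the projected bracket operators
  have hpPK : ∀ w : G, θ w = 0 → pP w ∈ K := by
    intro w hw
    refine Submodule.mem_inf.mpr ⟨hpPmem w, ?_⟩
    rw [LinearMap.mem_ker]
    have h1 : θ (w - pP w) = 0 := hadapt _ (hUpart w)
    have : θ w = θ (w - pP w) + θ (pP w) := by rw [← map_add]; congr 1; abel
    rw [hw, h1] at this
    linarith
  have hskewC : ∀ u ∈ U, ∀ p ∈ P, ∀ q ∈ P,
      g (pP ⁅u, p⁆) q = - g p (pP ⁅u, q⁆) := by
    intro u hu p hp q hq
    have e1 : g (pP ⁅u, p⁆) q = g ⁅u, p⁆ q := by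
      have h1 : g (⁅u, p⁆ - pP ⁅u, p⁆) q = 0 := hPg q hq _ (hUpart _)
      have h2' : g ⁅u, p⁆ q - g (pP ⁅u, p⁆) q = 0 := by
        simpa [map_sub, LinearMap.sub_apply] using h1
      linarith
    have e2 : g p (pP ⁅u, q⁆) = g ⁅u, q⁆ p := by
      have h0 : g p (pP ⁅u, q⁆) = g (pP ⁅u, q⁆) p := hsymm _ _
      have h1 : g (⁅u, q⁆ - pP ⁅u, q⁆) p = 0 := hPg p hp _ (hUpart _)
      have h2' : g ⁅u, q⁆ p - g (pP ⁅u, q⁆) p = 0 := by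
        simpa [map_sub, LinearMap.sub_apply] using h1
      linarith
    rw [e1, e2]
    have := pol1 u hu p hp q hq
    linarith
  have hCa : ∀ u ∈ U, pP ⁅u, a⁆ = 0 := by
    intro u hu
    set w : G := pP ⁅u, a⁆ with hw
    have hwK : w ∈ K := hpPK _ (hclosed u a)
    have hww : g w w = 0 := by
      have h1 : g (pP ⁅u, a⁆) w = - g a (pP ⁅u, w⁆) :=
        hskewC u hu a haP w (hKP hwK)
      have h2' : g a (pP ⁅u, w⁆) = 0 := by
        have hk : pP ⁅u, w⁆ ∈ K := hpPK _ (hclosed u w)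
        have := haK _ hk
        rw [hsymm]
        exact this
      rw [h2'] at h1
      simpa [hw] using h1
    by_contra h0
    have := hpos w h0
    rw [hww] at this
    exact lt_irrefl 0 this
  have hUa : ∀ u ∈ U, ⁅u, a⁆ ∈ U := by
    intro u hu
    have h := hUpart ⁅u, a⁆
    rw [hCa u hu, sub_zero] at h
    exact h
  have haU : ∀ u ∈ U, ⁅a, u⁆ ∈ U := by
    intro u hu
    rw [← lie_skew]
    exact neg_mem (hUa u hu)
  -- bundled operators
  set BU : LinearMap.BilinForm ℝ ↥U := g.restrict U with hBU
  have hBUapp : ∀ v w : ↥U, BU v w = g ↑v ↑w := by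
    intro v w; simp [hBU, LinearMap.BilinForm.restrict_apply]
  have hBUsymm : ∀ v w : ↥U, BU v w = BU w v := by
    intro v w; rw [hBUapp, hBUapp]; exact hsymm _ _
  have hBUpos : ∀ v : ↥U, v ≠ 0 → 0 < BU v v := by
    intro v hv
    rw [hBUapp]
    exact hpos _ (fun hc => hv (Subtype.ext hc))
  set BK : LinearMap.BilinForm ℝ ↥K := g.restrict K with hBK
  have hBKapp : ∀ v w : ↥K, BK v w = g ↑v ↑w := by
    intro v w; simp [hBK, LinearMap.BilinForm.restrict_apply]
  have hBKsymm : ∀ v w : ↥K, BK v w = BK w v := by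
    intro v w; rw [hBKapp, hBKapp]; exact hsymm _ _
  have hBKpos : ∀ v : ↥K, v ≠ 0 → 0 < BK v v := by
    intro v hv
    rw [hBKapp]
    exact hpos _ (fun hc => hv (Subtype.ext hc))
  set Λ : ↥U →ₗ[ℝ] ↥U :=
    (LieAlgebra.ad ℝ G a).restrict (fun u hu => haU u hu) with hΛ
  have hΛcoe : ∀ u : ↥U, (Λ u : G) = ⁅a, (↑u : G)⁆ := by
    intro u
    rfl
  have hMKmem : ∀ k ∈ K, ⁅a, k⁆ ∈ K := by
    intro k hk
    refine Submodule.mem_inf.mpr ⟨hPsub a haP k (hKP hk), ?_⟩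
    rw [LinearMap.mem_ker]
    exact hclosed a k
  set MK : ↥K →ₗ[ℝ] ↥K :=
    (LieAlgebra.ad ℝ G a).restrict (fun k hk => hMKmem k hk) with hMK
  have hMKcoe : ∀ k : ↥K, (MK k : G) = ⁅a, (↑k : G)⁆ := by
    intro k
    rfl
  have hFmem : ∀ (u : G) (k : ↥K), (pP ∘ₗ LieAlgebra.ad ℝ G u ∘ₗ K.subtype) k ∈ K := by
    intro u k
    simp only [LinearMap.comp_apply, LieAlgebra.ad_apply, Submodule.coe_subtype]
    exact hpPK _ (hclosed u ↑k)
  set F : ↥U →ₗ[ℝ] Module.End ℝ ↥K :=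
    { toFun := fun u => LinearMap.codRestrict K
        (pP ∘ₗ LieAlgebra.ad ℝ G (↑u : G) ∘ₗ K.subtype) (hFmem ↑u)
      map_add' := by
        intro u v
        ext k
        simp [add_lie]
      map_smul' := by
        intro c u
        ext k
        simp [smul_lie] } with hF
  have hFcoe : ∀ (u : ↥U) (k : ↥K), (F u k : G) = pP ⁅(↑u : G), (↑k : G)⁆ := by
    intro u k
    simp [hF]
  have hFskew : ∀ (u : ↥U) (k k' : ↥K), BK (F u k) k' = - BK k (F u k') := by
    intro u k k'
    rw [hBKapp, hBKapp, hFcoe, hFcoe]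
    exact hskewC ↑u u.2 ↑k (hKP k.2) ↑k' (hKP k'.2)
  have hLprop : ∀ u v : ↥U, BU (Λ u) v + BU u (Λ v) = 2 * BU u v := by
    intro u v
    rw [hBUapp, hBUapp, hBUapp, hΛcoe, hΛcoe]
    have h := pol2 a haP ↑u u.2 ↑v v.2
    rw [haθ] at h
    have hsy : g ↑u ⁅a, (↑v : G)⁆ = g ⁅a, (↑v : G)⁆ ↑u := hsymm _ _
    linarith
  have hFcomm : ∀ u : ↥U, F (Λ u) = MK * F u - F u * MK := by
    intro u
    ext k
    have lhs : (F (Λ u) k : G) = pP ⁅⁅a, (↑u : G)⁆, (↑k : G)⁆ := by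
      rw [hFcoe, hΛcoe]
    have rhs : (((MK * F u - F u * MK) k : ↥K) : G)
        = ⁅a, pP ⁅(↑u : G), (↑k : G)⁆⁆ - pP ⁅(↑u : G), ⁅a, (↑k : G)⁆⁆ := by
      simp only [LinearMap.sub_apply, Submodule.coe_sub, Module.End.mul_apply]
      rw [hMKcoe, hFcoe, hFcoe, hMKcoe]
    have key : pP ⁅⁅a, (↑u : G)⁆, (↑k : G)⁆
        = ⁅a, pP ⁅(↑u : G), (↑k : G)⁆⁆ - pP ⁅(↑u : G), ⁅a, (↑k : G)⁆⁆ := by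
      have hjac : ⁅(↑u : G), ⁅a, (↑k : G)⁆⁆
          = ⁅⁅(↑u : G), a⁆, (↑k : G)⁆ + ⁅a, ⁅(↑u : G), (↑k : G)⁆⁆ := leibniz_lie _ _ _
      have hsk : ⁅⁅a, (↑u : G)⁆, (↑k : G)⁆ = - ⁅⁅(↑u : G), a⁆, (↑k : G)⁆ := by
        rw [← neg_lie, lie_skew]
      have hsplit2 : pP ⁅a, ⁅(↑u : G), (↑k : G)⁆⁆ = ⁅a, pP ⁅(↑u : G), (↑k : G)⁆⁆ := by
        set w := ⁅(↑u : G), (↑k : G)⁆ with hwdef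
        have hw : w = (w - pP w) + pP w := by abel
        have h1 : ⁅a, w⁆ = ⁅a, w - pP w⁆ + ⁅a, pP w⁆ := by
          nth_rewrite 1 [hw]; rw [lie_add]
        rw [h1, map_add]
        have h2' : pP ⁅a, w - pP w⁆ = 0 := hpPU _ (haU _ (hUpart w))
        have h3 : pP ⁅a, pP w⁆ = ⁅a, pP w⁆ := by
          apply hpPP
          exact hPsub a haP _ (hpPmem w)
        rw [h2', h3, zero_add]
      have := congrArg pP hjac
      rw [map_add] at this
      rw [hsk, map_neg, hsplit2] at *
      rw [this]
      abel
    rw [lhs, rhs, key]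
  have htrcomm : ∀ u v : ↥U,
      LinearMap.trace ℝ ↥K (F (Λ u) * F v) + LinearMap.trace ℝ ↥K (F u * F (Λ v)) = 0 := by
    intro u v
    rw [hFcomm u, hFcomm v]
    have hcyc := LinearMap.trace_mul_comm ℝ MK (F u * F v)
    simp only [sub_mul, mul_sub, map_sub, mul_assoc] at *
    linarith
  have hF0 : F = 0 :=
    lcp_rep_vanish BU hBUsymm hBUpos BK hBKsymm hBKpos F hFskew Λ hLprop htrcomm
  have hC0 : ∀ u ∈ U, ∀ k ∈ K, pP ⁅u, k⁆ = 0 := by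
    intro u hu k hk
    have h := congrArg (fun L => ((L ⟨k, hk⟩ : ↥K) : G)) (congrArg (fun F => F ⟨u, hu⟩) hF0)
    rw [hFcoe ⟨u, hu⟩ ⟨k, hk⟩] at h
    simpa using h
  have hCP : ∀ u ∈ U, ∀ p ∈ P, pP ⁅u, p⁆ = 0 := by
    intro u hu p hp
    set k : G := p - θ p • a with hkdef
    have hkK : k ∈ K := by
      refine Submodule.mem_inf.mpr ⟨sub_mem hp (Submodule.smul_mem _ _ haP), ?_⟩
      rw [LinearMap.mem_ker, hkdef, map_sub, map_smul, smul_eq_mul, haθ]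
      ring
    have hpk : p = k + θ p • a := by rw [hkdef]; abel
    rw [hpk, lie_add, lie_smul, map_add, map_smul]
    rw [hC0 u hu k hkK, hCa u hu]
    simp
  intro x u hu
  have hx : x = (x - pP x) + pP x := by abel
  have h1 : ⁅u, x⁆ ∈ U := by
    rw [hx, lie_add]
    apply add_mem
    · exact hUsub u hu _ (hUpart x)
    · have h := hUpart ⁅u, pP x⁆
      rw [hCP u hu _ (hpPmem x), sub_zero] at h
      exact h
  rw [← lie_skew]
  exact neg_mem h1
end adinv

/-- On a Lie algebra `𝔤`, for every non-zero proper subspace `𝔲 ⊊ 𝔤` there is at most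
one closed 1-form `θ` for which some metric `g` makes `(g,θ,𝔲)` an adapted LCP
structure; indeed `θ` is determined by `θ(x) = (1/dim 𝔲)·tr(ad_x|_𝔲)`. -/
theorem adapted_lcp_lee_form_unique
    {G : Type*} [LieRing G] [LieAlgebra ℝ G] [FiniteDimensional ℝ G]
    (g : LinearMap.BilinForm ℝ G)
    (hsymm : ∀ x y : G, g x y = g y x)
    (hpos : ∀ x : G, x ≠ 0 → 0 < g x x)
    -- θ : non-zero closed 1-form
    (θ : G →ₗ[ℝ] ℝ) (hθ : θ ≠ 0) (hclosed : ∀ x y : G, θ ⁅x, y⁆ = 0)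
    -- 𝔲 : non-zero subspace
    (U : Submodule ℝ G) (hUne : U ≠ ⊥)
    -- the Weyl connection ∇^θ determined by g and θ
    (N : G →ₗ[ℝ] Module.End ℝ G)
    (hN : ∀ x y z : G, g (N x y) z =
      (g ⁅x, y⁆ z - g ⁅x, z⁆ y - g ⁅y, z⁆ x) / 2
        + θ x * g y z + θ y * g x z - θ z * g x y)
    -- (1) 𝔲 and 𝔲^⊥ are Lie subalgebras
    (hUsub : ∀ u ∈ U, ∀ v ∈ U, ⁅u, v⁆ ∈ U)
    (hPsub : ∀ x ∈ LinearMap.BilinForm.orthogonal g U,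
             ∀ y ∈ LinearMap.BilinForm.orthogonal g U,
             ⁅x, y⁆ ∈ LinearMap.BilinForm.orthogonal g U)
    -- (2)
    (h2 : ∀ u ∈ U, ∀ x ∈ LinearMap.BilinForm.orthogonal g U,
      g ⁅u, x⁆ x = θ u * g x x ∧ g ⁅x, u⁆ u = θ x * g u u)
    -- (3) 𝔲 is ∇^θ-parallel and x ↦ ∇^θ_x|_𝔲 is a Lie algebra representation
    (hpar : ∀ x : G, ∀ u ∈ U, N x u ∈ U)
    (hrep : ∀ x y : G, ∀ u ∈ U, N ⁅x, y⁆ u = N x (N y u) - N y (N x u))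
    -- the LCP structure (g,θ,U) is adapted (hence proper)
    (hproper : U ≠ ⊤) (hadapt : ∀ u ∈ U, θ u = 0)
    -- a second adapted LCP structure (g2,θ2,U) with the same flat space U
    (g2 : LinearMap.BilinForm ℝ G)
    (hsymm2 : ∀ x y : G, g2 x y = g2 y x)
    (hpos2 : ∀ x : G, x ≠ 0 → 0 < g2 x x)
    (θ2 : G →ₗ[ℝ] ℝ) (hθ2 : θ2 ≠ 0) (hclosed2 : ∀ x y : G, θ2 ⁅x, y⁆ = 0)
    (N2 : G →ₗ[ℝ] Module.End ℝ G)
    (hN2 : ∀ x y z : G, g2 (N2 x y) z =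
      (g2 ⁅x, y⁆ z - g2 ⁅x, z⁆ y - g2 ⁅y, z⁆ x) / 2
        + θ2 x * g2 y z + θ2 y * g2 x z - θ2 z * g2 x y)
    (hUsub2 : ∀ u ∈ U, ∀ v ∈ U, ⁅u, v⁆ ∈ U)
    (hPsub2 : ∀ x ∈ LinearMap.BilinForm.orthogonal g2 U,
              ∀ y ∈ LinearMap.BilinForm.orthogonal g2 U,
              ⁅x, y⁆ ∈ LinearMap.BilinForm.orthogonal g2 U)
    (h22 : ∀ u ∈ U, ∀ x ∈ LinearMap.BilinForm.orthogonal g2 U,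
      g2 ⁅u, x⁆ x = θ2 u * g2 x x ∧ g2 ⁅x, u⁆ u = θ2 x * g2 u u)
    (hpar2 : ∀ x : G, ∀ u ∈ U, N2 x u ∈ U)
    (hrep2 : ∀ x y : G, ∀ u ∈ U, N2 ⁅x, y⁆ u = N2 x (N2 y u) - N2 y (N2 x u))
    (hadapt2 : ∀ u ∈ U, θ2 u = 0) :
    -- the Lee form is unique and determined by θ(x) = (1/dim 𝔲)·tr(ad_x|_𝔲)
    θ = θ2 ∧
    (∀ x : G, ∀ T : U →ₗ[ℝ] U, (∀ v : U, (T v : G) = ⁅x, (v : G)⁆) →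
      θ x = (1 / (Module.finrank ℝ U : ℝ)) * LinearMap.trace ℝ U T) := by
  have hd : (0:ℝ) < (Module.finrank ℝ ↥U : ℝ) := by
    haveI : Nontrivial ↥U := Submodule.nontrivial_iff_ne_bot.mpr hUne
    exact_mod_cast Module.finrank_pos
  have hdne : (Module.finrank ℝ ↥U : ℝ) ≠ 0 := ne_of_gt hd
  have key : ∀ x : G, ∀ T : U →ₗ[ℝ] U, (∀ v : U, (T v : G) = ⁅x, (v : G)⁆) →
      θ x = (1 / (Module.finrank ℝ U : ℝ)) * LinearMap.trace ℝ U T := by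
    intro x T hT
    have e1 := lcp_trace_formula g hsymm hpos θ U N hN hUsub h2 hpar hrep hadapt x T hT
    rw [e1, one_div]
    field_simp
  refine ⟨?_, key⟩
  apply LinearMap.ext
  intro x
  have hadU := lcp_ad_invariant g hsymm hpos θ hθ hclosed U hUsub hPsub h2 hadapt
  set T : ↥U →ₗ[ℝ] ↥U :=
    (LieAlgebra.ad ℝ G x).restrict (fun u hu => hadU x u hu) with hTdef
  have hT : ∀ v : U, (T v : G) = ⁅x, (v : G)⁆ := by
    intro v; rfl
  have e1 := lcp_trace_formula g hsymm hpos θ U N hN hUsub h2 hpar hrep hadapt x T hT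
  have e2 := lcp_trace_formula g2 hsymm2 hpos2 θ2 U N2 hN2 hUsub2 h22 hpar2 hrep2 hadapt2 x T hT
  exact mul_right_cancel₀ hdne (e1.symm.trans e2)
end
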